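/- arXiv:0903.5210 — 8 statements merged into one kernel-verified Lean document; each statement's English description precedes it below -/
import Mathlib

section
/- Let r ∈ ℓ²(ℤ) and n ∈ ℕ with n ≥ 1. Then ∑_{i ≠ -n} |(n-i)/(n+i)|² |r(n-i)|² ≤ C n² (E_n(r) + ‖r‖/n)², where E_n(r) = (∑_{|k| ≥ n} |r(k)|²)^{1/2} and C is an absolute constant. -/
/-!
Substituting `k = n - i` turns the sum into `∑ₖ |k / (2n - k)|² |r k|²`. For `|k| < n` the
weight is at most `1`, since then `|k| ≤ n ≤ |2n - k|`; for `|k| ≥ n` it is at most `(3n)²`,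
since `2n - k` is a nonzero integer (or the term vanishes). Hence the sum is at most
`9 n² E_n(r)² + ‖r‖² ≤ 9 n² (E_n(r) + ‖r‖ / n)²`.
-/

lemma abs_div_two_mul_sub_le_one {x N : ℝ} (h : |x| ≤ N) : |x / (2 * N - x)| ≤ 1 := by
  rw [abs_div]
  refine div_le_one_of_le₀ ?_ (abs_nonneg _)
  exact h.trans (by linarith [le_abs_self (2 * N - x), le_abs_self x])

lemma abs_div_le_of_one_le_abs_sub {x c : ℝ} (hc : 0 ≤ c) (h : 1 ≤ |c - x|) :
    |x / (c - x)| ≤ c + 1 := by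
  rw [abs_div, div_le_iff₀ (by linarith)]
  calc |x| = |c - (c - x)| := by rw [sub_sub_cancel]
    _ ≤ |c| + |c - x| := abs_sub _ _
    _ ≤ (c + 1) * |c - x| := by rw [abs_of_nonneg hc]; nlinarith

-- At `k = 2 * n` the quotient is the junk value `k / 0 = 0`.
lemma abs_intCast_div_two_mul_sub_le (k n : ℤ) (hn : 0 ≤ n) :
    |(k : ℝ) / (2 * n - k)| ≤ 2 * n + 1 := by
  by_cases hk : 2 * n - k = 0
  · have : (2 * n - k : ℝ) = 0 := by exact_mod_cast hk
    rw [this, div_zero, abs_zero]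
    positivity
  · refine abs_div_le_of_one_le_abs_sub (by positivity) ?_
    exact_mod_cast Int.one_le_abs hk

lemma tsum_ne_neg_eq_tsum_sub_left (g : ℤ → ℝ) (n : ℕ) :
    ∑' i : {i : ℤ // i ≠ -(n : ℤ)},
        |(((n : ℝ) - (i.1 : ℝ)) / ((n : ℝ) + (i.1 : ℝ)))| ^ 2 * g ((n : ℤ) - i.1)
      = ∑' k : ℤ, |(k : ℝ) / (2 * n - k)| ^ 2 * g k := by
  set F : ℤ → ℝ := fun i => |(((n : ℝ) - (i : ℝ)) / ((n : ℝ) + (i : ℝ)))| ^ 2 * g ((n : ℤ) - i)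
  have hsupp : Function.support F ⊆ {i : ℤ | i ≠ -(n : ℤ)} := by
    rintro i hi rfl
    simp [F] at hi
  refine (tsum_subtype_eq_of_support_subset hsupp).trans ?_
  rw [← (Equiv.subLeft (n : ℤ)).tsum_eq F]
  congr! 2 with k
  simp only [F, Equiv.subLeft_apply, sub_sub_cancel]
  push_cast
  ring_nf

lemma sq_abs_div_two_mul_sub_mul_le (f : ℤ → ℝ) (hf : ∀ k, 0 ≤ f k) (n : ℕ) (hn : 1 ≤ n)
    (k : ℤ) :
    |(k : ℝ) / (2 * n - k)| ^ 2 * f k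
      ≤ 9 * (n : ℝ) ^ 2 * {k : ℤ | (n : ℤ) ≤ |k|}.indicator f k + f k := by
  have hn1 : (1 : ℝ) ≤ n := by exact_mod_cast hn
  by_cases hk : (n : ℤ) ≤ |k|
  · rw [Set.indicator_of_mem (show k ∈ {k : ℤ | (n : ℤ) ≤ |k|} from hk)]
    have hw : |(k : ℝ) / (2 * n - k)| ≤ 3 * n := by
      have := abs_intCast_div_two_mul_sub_le k n (by positivity)
      push_cast at this
      linarith
    have : |(k : ℝ) / (2 * n - k)| ^ 2 ≤ 9 * (n : ℝ) ^ 2 := by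
      nlinarith [abs_nonneg ((k : ℝ) / (2 * n - k))]
    nlinarith [hf k]
  · rw [Set.indicator_of_notMem (show k ∉ {k : ℤ | (n : ℤ) ≤ |k|} from hk), mul_zero, zero_add]
    have hkn : |(k : ℝ)| ≤ n := by
      rw [← Int.cast_abs]; exact_mod_cast (not_le.mp hk).le
    have hw := abs_div_two_mul_sub_le_one hkn
    have : |(k : ℝ) / (2 * n - k)| ^ 2 ≤ 1 := by
      nlinarith [abs_nonneg ((k : ℝ) / (2 * n - k))]
    nlinarith [hf k]

lemma tsum_sq_abs_div_two_mul_sub_mul_le (f : ℤ → ℝ) (hf : ∀ k, 0 ≤ f k) (hsum : Summable f)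
    (n : ℕ) (hn : 1 ≤ n) :
    ∑' k : ℤ, |(k : ℝ) / (2 * n - k)| ^ 2 * f k
      ≤ 9 * (n : ℝ) ^ 2 * ∑' k : {k : ℤ // (n : ℤ) ≤ |k|}, f k.1 + ∑' k : ℤ, f k := by
  set s : Set ℤ := {k : ℤ | (n : ℤ) ≤ |k|}
  have hbound : Summable fun k => 9 * (n : ℝ) ^ 2 * s.indicator f k + f k :=
    ((hsum.indicator s).mul_left _).add hsum
  have hle := sq_abs_div_two_mul_sub_mul_le f hf n hn
  calc ∑' k : ℤ, |(k : ℝ) / (2 * n - k)| ^ 2 * f k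
      ≤ ∑' k : ℤ, (9 * (n : ℝ) ^ 2 * s.indicator f k + f k) :=
        (hbound.of_nonneg_of_le (fun k => mul_nonneg (sq_nonneg _) (hf k)) hle).tsum_le_tsum
          hle hbound
    _ = 9 * (n : ℝ) ^ 2 * ∑' k : s, f k.1 + ∑' k : ℤ, f k := by
        rw [(hsum.indicator s).mul_left _ |>.tsum_add hsum, tsum_mul_left, tsum_subtype]

lemma mul_sq_add_sq_le_mul_sq_add_div {a b N : ℝ} (ha : 0 ≤ a) (hb : 0 ≤ b) (hN : 0 < N) :
    9 * N ^ 2 * a ^ 2 + b ^ 2 ≤ 9 * N ^ 2 * (a + b / N) ^ 2 := by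
  have : 9 * N ^ 2 * (a + b / N) ^ 2 = 9 * (N * a + b) ^ 2 := by field_simp
  rw [this]
  nlinarith [mul_nonneg (mul_nonneg hN.le ha) hb]

/-- Lemma 3.1 of the paper. -/
theorem gap_sum_estimate :
    ∃ C : ℝ, 0 < C ∧ ∀ (r : ℤ → ℂ), Summable (fun k => ‖r k‖ ^ 2) →
      ∀ n : ℕ, 1 ≤ n →
        (∑' i : {i : ℤ // i ≠ -(n : ℤ)},
            |(((n : ℝ) - (i.1 : ℝ)) / ((n : ℝ) + (i.1 : ℝ)))| ^ 2 * ‖r ((n : ℤ) - i.1)‖ ^ 2)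
          ≤ C * (n : ℝ) ^ 2 *
            (Real.sqrt (∑' k : {k : ℤ // (n : ℤ) ≤ |k|}, ‖r k.1‖ ^ 2) +
              Real.sqrt (∑' k : ℤ, ‖r k‖ ^ 2) / (n : ℝ)) ^ 2 := by
  refine ⟨9, by norm_num, fun r hr n hn => ?_⟩
  set tail := ∑' k : {k : ℤ // (n : ℤ) ≤ |k|}, ‖r k.1‖ ^ 2
  set total := ∑' k : ℤ, ‖r k‖ ^ 2
  have htail : Real.sqrt tail ^ 2 = tail := Real.sq_sqrt (tsum_nonneg fun _ => sq_nonneg _)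
  have htotal : Real.sqrt total ^ 2 = total := Real.sq_sqrt (tsum_nonneg fun _ => sq_nonneg _)
  calc _ = ∑' k : ℤ, |(k : ℝ) / (2 * n - k)| ^ 2 * ‖r k‖ ^ 2 :=
        tsum_ne_neg_eq_tsum_sub_left (fun k => ‖r k‖ ^ 2) n
    _ ≤ 9 * (n : ℝ) ^ 2 * tail + total :=
        tsum_sq_abs_div_two_mul_sub_mul_le _ (fun _ => sq_nonneg _) hr n hn
    _ = 9 * (n : ℝ) ^ 2 * Real.sqrt tail ^ 2 + Real.sqrt total ^ 2 := by rw [htail, htotal]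
    _ ≤ _ := mul_sq_add_sq_le_mul_sq_add_div (Real.sqrt_nonneg _) (Real.sqrt_nonneg _)
        (by exact_mod_cast hn)
end

section
/- Let r ∈ ℓ²(ℤ) and for each n > N let H(n) be a Hilbert–Schmidt matrix operator on ℓ² with H_* := sup_{n>N} ‖H(n)‖_{HS} < ∞. Then ∑_{i,j ≠ ±n} |(n-i)/(n+i)|^{1/2} |(n+j)/(n-j)|^{1/2} |r(n-i)| |r(n+j)| |H_{ij}(n)| ≤ C n ‖r‖ (E_n(r) + ‖r‖/n) H_*, where C is an absolute constant. -/
/-!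
Substituting `k = n - i` in the first weight and `k = n + j` in the second turns both into
`|k / (2n - k)|`, which is at most `1` for `|k| < n` and at most `2n + 1` for every `k`. Hence
both weighted sequences have squared `ℓ²` norm at most `‖r‖² + (2n + 1) E_n(r)²`, and the
Cauchy–Schwarz inequality on `ℓ²(ℤ × ℤ)` against `H(n)` bounds the double sum by this quantity
times `‖H(n)‖_HS`. Since `E_n(r) ≤ ‖r‖`, that is at most `3 n ‖r‖ (E_n(r) + ‖r‖ / n) H_*`.
-/

theorem summable_and_tsum_mul_le_sqrt_mul_sqrt {ι : Type*} {f g : ι → ℝ} (hf : ∀ i, 0 ≤ f i)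
    (hg : ∀ i, 0 ≤ g i) (hf_sum : Summable fun i => f i ^ 2) (hg_sum : Summable fun i => g i ^ 2) :
    (Summable fun i => f i * g i) ∧
      ∑' i, f i * g i ≤ √(∑' i, f i ^ 2) * √(∑' i, g i ^ 2) := by
  simp only [← Real.rpow_two, Real.sqrt_eq_rpow] at hf_sum hg_sum ⊢
  exact Real.summable_and_inner_le_Lp_mul_Lq_tsum_of_nonneg .two_two hf hg hf_sum hg_sum

theorem summable_and_tsum_mul_mul_le {ι κ : Type*} {a : ι → ℝ} {b : κ → ℝ} {h : ι × κ → ℝ}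
    (ha : ∀ i, 0 ≤ a i) (hb : ∀ j, 0 ≤ b j) (hh : ∀ p, 0 ≤ h p)
    (ha_sum : Summable fun i => a i ^ 2) (hb_sum : Summable fun j => b j ^ 2)
    (hh_sum : Summable fun p => h p ^ 2) :
    (Summable fun p : ι × κ => a p.1 * b p.2 * h p) ∧
      ∑' p : ι × κ, a p.1 * b p.2 * h p ≤
        √(∑' i, a i ^ 2) * √(∑' j, b j ^ 2) * √(∑' p, h p ^ 2) := by
  have hab_sum : Summable fun p : ι × κ => (a p.1 * b p.2) ^ 2 := by
    simpa only [mul_pow] using ha_sum.mul_of_nonneg hb_sum (fun i => sq_nonneg (a i))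
      (fun j => sq_nonneg (b j))
  have hab_tsum : ∑' p : ι × κ, (a p.1 * b p.2) ^ 2 = (∑' i, a i ^ 2) * ∑' j, b j ^ 2 := by
    simp only [mul_pow]
    exact (ha_sum.tsum_mul_tsum hb_sum (by simpa only [mul_pow] using hab_sum)).symm
  obtain ⟨hsum, hle⟩ := summable_and_tsum_mul_le_sqrt_mul_sqrt
    (fun p : ι × κ => mul_nonneg (ha p.1) (hb p.2)) hh hab_sum hh_sum
  refine ⟨hsum, hle.trans_eq ?_⟩
  rw [hab_tsum, Real.sqrt_mul (tsum_nonneg fun i => sq_nonneg (a i))]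

theorem summable_and_tsum_mul_le_tsum_add_mul_tsum {ι : Type*} {w x : ι → ℝ} {s : Set ι} {c : ℝ}
    (hw : ∀ i, 0 ≤ w i) (hw_compl : ∀ i ∉ s, w i ≤ 1) (hw_mem : ∀ i ∈ s, w i ≤ c)
    (hx : ∀ i, 0 ≤ x i) (hx_sum : Summable x) :
    (Summable fun i => w i * x i) ∧ ∑' i, w i * x i ≤ ∑' i, x i + c * ∑' i : s, x i := by
  have hind_sum : Summable (s.indicator fun i => c * x i) := (hx_sum.mul_left c).indicator s
  have hle : ∀ i, w i * x i ≤ x i + s.indicator (fun i => c * x i) i := by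
    intro i
    by_cases hi : i ∈ s
    · rw [Set.indicator_of_mem hi]
      nlinarith [hw_mem i hi, hx i]
    · rw [Set.indicator_of_notMem hi]
      nlinarith [hw_compl i hi, hx i]
  have hsum : Summable fun i => w i * x i :=
    (hx_sum.add hind_sum).of_nonneg_of_le (fun i => mul_nonneg (hw i) (hx i)) hle
  refine ⟨hsum, (hsum.tsum_le_tsum hle (hx_sum.add hind_sum)).trans_eq ?_⟩
  rw [hx_sum.tsum_add hind_sum, ← tsum_mul_left, tsum_subtype s fun i => c * x i]

theorem abs_div_two_mul_sub_le (n : ℕ) (k : ℤ) :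
    |(k : ℝ) / (2 * n - k)| ≤ 2 * n + 1 := by
  -- `k = 2n` (i.e. `i = -n` or `j = n`) divides by zero, giving the junk value `0`.
  rcases eq_or_ne k (2 * n) with rfl | hk
  · simp; positivity
  have hd : (1 : ℝ) ≤ |2 * n - (k : ℝ)| := by
    exact_mod_cast Int.one_le_abs (sub_ne_zero.2 hk.symm)
  rw [abs_div, div_le_iff₀ (by linarith)]
  have := abs_sub_abs_le_abs_sub (k : ℝ) (2 * n)
  rw [abs_sub_comm, abs_of_nonneg (by positivity : (0 : ℝ) ≤ 2 * n)] at this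
  nlinarith

theorem abs_div_two_mul_sub_le_one_s2 {n : ℕ} {k : ℤ} (hk : |k| < n) :
    |(k : ℝ) / (2 * n - k)| ≤ 1 := by
  have hk' : |(k : ℝ)| < n := by exact_mod_cast hk
  have := abs_sub_abs_le_abs_sub (2 * n : ℝ) k
  rw [abs_of_nonneg (by positivity : (0 : ℝ) ≤ 2 * n)] at this
  rw [abs_div]
  exact div_le_one_of_le₀ (by linarith) (abs_nonneg _)

theorem summable_and_tsum_abs_div_two_mul_sub_mul_le (n : ℕ) {x : ℤ → ℝ} (hx : ∀ k, 0 ≤ x k)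
    (hx_sum : Summable x) :
    (Summable fun k : ℤ => |(k : ℝ) / (2 * n - k)| * x k) ∧
      ∑' k : ℤ, |(k : ℝ) / (2 * n - k)| * x k ≤
        ∑' k, x k + (2 * n + 1) * ∑' k : {k : ℤ // (n : ℤ) ≤ |k|}, x k :=
  summable_and_tsum_mul_le_tsum_add_mul_tsum (s := {k : ℤ | (n : ℤ) ≤ |k|})
    (fun _ => abs_nonneg _) (fun _ hk => abs_div_two_mul_sub_le_one_s2 (not_le.1 hk))
    (fun k _ => abs_div_two_mul_sub_le n k) hx hx_sum

theorem add_mul_le_three_mul_sqrt_mul_sqrt_add {T U n : ℝ} (hU : 0 ≤ U) (hUT : U ≤ T) (hn : 1 ≤ n) :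
    T + (2 * n + 1) * U ≤ 3 * n * √T * (√U + √T / n) := by
  have hsqrt : √U ≤ √T := Real.sqrt_le_sqrt hUT
  have hT : √T ^ 2 = T := Real.sq_sqrt (hU.trans hUT)
  have hU' : √U ^ 2 = U := Real.sq_sqrt hU
  have hexpand : 3 * n * √T * (√U + √T / n) = 3 * n * (√U * √T) + 3 * T := by
    field_simp
    linear_combination hT
  rw [hexpand]
  nlinarith [Real.sqrt_nonneg U, mul_le_mul_of_nonneg_left hsqrt (Real.sqrt_nonneg U)]

theorem summable_and_tsum_sq_sqrt_abs_div_mul_norm_le {E : Type*} [SeminormedAddCommGroup E]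
    (n : ℕ) {r : ℤ → E} (hr : Summable fun k => ‖r k‖ ^ 2) :
    (Summable fun i : ℤ => (√|((n : ℝ) - i) / (n + i)| * ‖r (n - i)‖) ^ 2) ∧
      ∑' i : ℤ, (√|((n : ℝ) - i) / (n + i)| * ‖r (n - i)‖) ^ 2 ≤
        ∑' k, ‖r k‖ ^ 2 + (2 * n + 1) * ∑' k : {k : ℤ // (n : ℤ) ≤ |k|}, ‖r k.1‖ ^ 2 := by
  obtain ⟨hW_sum, hW_le⟩ :=
    summable_and_tsum_abs_div_two_mul_sub_mul_le n (fun k => sq_nonneg ‖r k‖) hr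
  have hsubst : ∀ i : ℤ, (√|((n : ℝ) - i) / (n + i)| * ‖r (n - i)‖) ^ 2 =
      |((n - i : ℤ) : ℝ) / (2 * n - ((n - i : ℤ) : ℝ))| * ‖r (n - i)‖ ^ 2 := fun i => by
    rw [mul_pow, Real.sq_sqrt (abs_nonneg _)]
    push_cast
    ring_nf
  simp only [hsubst]
  exact ⟨(Equiv.subLeft (n : ℤ)).summable_iff.2 hW_sum,
    ((Equiv.subLeft (n : ℤ)).tsum_eq _).trans_le hW_le⟩

/-- Lemma 3.2 of the paper. -/
theorem weighted_double_sum_estimate :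
    ∃ C : ℝ, 0 < C ∧
      ∀ (N : ℕ) (r : ℤ → ℂ) (H : ℕ → ℤ → ℤ → ℂ) (Hstar : ℝ),
        Summable (fun k => ‖r k‖ ^ 2) →
        (∀ n : ℕ, N < n → Summable (fun p : ℤ × ℤ => ‖H n p.1 p.2‖ ^ 2) ∧
          Real.sqrt (∑' p : ℤ × ℤ, ‖H n p.1 p.2‖ ^ 2) ≤ Hstar) →
        ∀ n : ℕ, N < n →
          (∑' p : {p : ℤ × ℤ // p.1 ≠ (n : ℤ) ∧ p.1 ≠ -(n : ℤ) ∧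
              p.2 ≠ (n : ℤ) ∧ p.2 ≠ -(n : ℤ)},
            Real.sqrt |((n : ℝ) - (p.1.1 : ℝ)) / ((n : ℝ) + (p.1.1 : ℝ))| *
              Real.sqrt |((n : ℝ) + (p.1.2 : ℝ)) / ((n : ℝ) - (p.1.2 : ℝ))| *
              ‖r ((n : ℤ) - p.1.1)‖ * ‖r ((n : ℤ) + p.1.2)‖ * ‖H n p.1.1 p.1.2‖)
          ≤ C * (n : ℝ) * Real.sqrt (∑' k : ℤ, ‖r k‖ ^ 2) *
            (Real.sqrt (∑' k : {k : ℤ // (n : ℤ) ≤ |k|}, ‖r k.1‖ ^ 2) +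
              Real.sqrt (∑' k : ℤ, ‖r k‖ ^ 2) / (n : ℝ)) * Hstar := by
  refine ⟨3, by norm_num, fun N r H Hstar hr hH n hn => ?_⟩
  obtain ⟨hH_sum, hH_le⟩ := hH n hn
  obtain ⟨ha_sum, ha_le⟩ := summable_and_tsum_sq_sqrt_abs_div_mul_norm_le n hr
  set a : ℤ → ℝ := fun i => √|((n : ℝ) - i) / (n + i)| * ‖r (n - i)‖
  have ha0 : ∀ i, 0 ≤ a i := fun i => by positivity
  -- The second weight is the first one at `-j`.
  obtain ⟨hF_sum, hF_le⟩ := summable_and_tsum_mul_mul_le ha0 (fun j => ha0 (-j))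
    (fun p => norm_nonneg (H n p.1 p.2)) ha_sum ((Equiv.neg ℤ).summable_iff.2 ha_sum) hH_sum
  have ha_neg : ∑' j, a (-j) ^ 2 = ∑' i, a i ^ 2 := (Equiv.neg ℤ).tsum_eq fun j => a j ^ 2
  rw [ha_neg, Real.mul_self_sqrt (tsum_nonneg fun _ => sq_nonneg _)] at hF_le
  have hE_le : ∑' k : {k : ℤ // (n : ℤ) ≤ |k|}, ‖r k.1‖ ^ 2 ≤ ∑' k, ‖r k‖ ^ 2 :=
    hr.tsum_subtype_le _ _ fun _ => sq_nonneg _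
  have hn1 : (1 : ℝ) ≤ n := by exact_mod_cast Nat.one_le_of_lt hn
  calc _ = ∑' p : {p : ℤ × ℤ // p.1 ≠ (n : ℤ) ∧ p.1 ≠ -(n : ℤ) ∧ p.2 ≠ (n : ℤ) ∧ p.2 ≠ -(n : ℤ)},
          a p.1.1 * a (-p.1.2) * ‖H n p.1.1 p.1.2‖ := tsum_congr fun p => by
        simp only [a, Int.cast_neg, sub_neg_eq_add, ← sub_eq_add_neg]
        ring
    _ ≤ ∑' p : ℤ × ℤ, a p.1 * a (-p.2) * ‖H n p.1 p.2‖ :=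
        hF_sum.tsum_subtype_le _ _ fun p => by positivity
    _ ≤ (∑' i, a i ^ 2) * Hstar := hF_le.trans (by gcongr)
    _ ≤ _ := by
        gcongr
        · exact (Real.sqrt_nonneg _).trans hH_le
        · exact ha_le.trans (add_mul_le_three_mul_sqrt_mul_sqrt_add
            (tsum_nonneg fun _ => sq_nonneg _) hE_le hn1)
end

section
/- Contraction trick: Let X₁ ⊆ X₀ be Banach spaces with ‖x‖₀ ≤ ‖x‖₁ for x ∈ X₁. Suppose F maps X₀ to X₀ and X₁ to X₁, and ‖F(x) − F(y)‖_j ≤ (1/2)‖x − y‖_j for all x,y ∈ X_j, j = 0,1. If a ∈ X₀ and c := a + F(a) ∈ X₁, then a ∈ X₁. -/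
/-- the contraction "Trick" (folklore of the 1950's), Section 8 of the paper.
`X₁ ⊆ X₀` are Banach spaces (the inclusion `ι` is an injective linear map with
`‖ι x‖₀ ≤ ‖x‖₁`), `F` acts on both spaces as a `1/2`-contraction, and the two actions are
compatible.  If `a ∈ X₀` and `c = a + F(a)` lies in `X₁`, then `a ∈ X₁`. -/
theorem contraction_trick
    {X₀ X₁ : Type*} [NormedAddCommGroup X₀] [NormedSpace ℝ X₀] [CompleteSpace X₀]
    [NormedAddCommGroup X₁] [NormedSpace ℝ X₁] [CompleteSpace X₁]
    (ι : X₁ →ₗ[ℝ] X₀) (hinj : Function.Injective ι)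
    (hnorm : ∀ x : X₁, ‖ι x‖ ≤ ‖x‖)
    (F₀ : X₀ → X₀) (F₁ : X₁ → X₁)
    (hcomm : ∀ x : X₁, ι (F₁ x) = F₀ (ι x))
    (h₀ : LipschitzWith (1/2 : NNReal) F₀)
    (h₁ : LipschitzWith (1/2 : NNReal) F₁)
    (a : X₀) (c : X₁) (hc : (ι c : X₀) = a + F₀ a) :
    ∃ a₁ : X₁, ι a₁ = a := by
  set G : X₁ → X₁ := fun y => c - F₁ y with hG
  have hGlip : LipschitzWith (1/2 : NNReal) G := by
    intro x y
    simpa [G, edist_sub_left] using h₁ x y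
  have hcontr : ContractingWith (1/2 : NNReal) G := ⟨by simpa using NNReal.half_lt_self one_ne_zero, hGlip⟩
  set b := ContractingWith.fixedPoint G hcontr with hbdef
  have hfix : G b = b := hcontr.fixedPoint_isFixedPt
  have hιb : ι b = ι c - F₀ (ι b) := by
    have := congrArg ι hfix.symm
    simpa [G, map_sub, hcomm] using this
  refine ⟨b, ?_⟩
  have ha : a = ι c - F₀ a := by rw [hc]; abel
  have hdist : dist (ι b) a ≤ (1/2 : ℝ) * dist (ι b) a := by
    calc dist (ι b) a = dist (ι c - F₀ (ι b)) (ι c - F₀ a) := by rw [← hιb, ← ha]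
    _ = dist (F₀ (ι b)) (F₀ a) := by rw [dist_sub_left]
    _ ≤ (1/2 : ℝ) * dist (ι b) a := by
        simpa using h₀.dist_le_mul (ι b) a
  have : dist (ι b) a = 0 := by nlinarith [dist_nonneg (x := ι b) (y := a)]
  exact dist_eq_zero.mp this
end

section
/- Suppose E_n(z) is analytic in the disc {|z| ≤ r}, E_n(0) = n², and |Im E_n(z)| ≤ σ r on that disc. Then (1/2π)∫₀^{2π} |E_n(r e^{it}) − n²| dt ≤ √2 σ r, and consequently the k-th Taylor coefficient a_k of E_n at 0 satisfies |a_k| ≤ √2 σ / r^{k−1} for every k ≥ 1. -/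
/-!
Put `F = E - n²`, so `F(0) = 0`. By the mean value property the circle average of `F²` is
`F(0)² = 0`; taking real parts, `(Re F)²` and `(Im F)²` have the same circle average, so the
mean of `|F|²` is at most `2 (σ r)²`. Jensen (Cauchy–Schwarz) bounds the mean of `|F|` by the
square root of that, and the Cauchy estimate `|a_k| ≤ mean |F| / r^k` for `k ≥ 1` gives the rest.
-/

open scoped Real
open Metric Real

theorem sq_circleAverage_le_circleAverage_sq {u : ℂ → ℝ} {c : ℂ} {R : ℝ}
    (hu : CircleIntegrable u c R) (hu2 : CircleIntegrable (fun z => u z ^ 2) c R) :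
    circleAverage u c R ^ 2 ≤ circleAverage (fun z => u z ^ 2) c R := by
  simp only [circleAverage_eq_intervalAverage]
  exact (even_two.convexOn_pow (𝕜 := ℝ)).map_set_average_le (continuous_pow 2).continuousOn
    isClosed_univ (by simp) (by simp [ENNReal.mul_eq_top]) (by simp)
    (intervalIntegrable_iff.mp hu) (intervalIntegrable_iff.mp hu2)

theorem circleAverage_re_sq_eq_circleAverage_im_sq {f : ℂ → ℂ} {c : ℂ} {R : ℝ}
    (hf : DiffContOnCl ℂ f (ball c |R|)) (hfc : f c = 0) :
    circleAverage (fun z => (f z).re ^ 2) c R = circleAverage (fun z => (f z).im ^ 2) c R := by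
  have hsph : ContinuousOn f (sphere c |R|) := hf.continuousOn_ball.mono sphere_subset_closedBall
  have hsq : circleAverage (fun z => f z ^ 2) c R = 0 := by
    rw [DiffContOnCl.circleAverage (f := fun z => f z ^ 2)
      ((differentiable_pow 2).comp_diffContOnCl hf), hfc, zero_pow two_ne_zero]
  have hre : circleAverage (fun z => (f z ^ 2).re) c R = 0 := by
    have := Complex.reCLM.circleAverage_comp_comm (f := fun z => f z ^ 2)
      (hsph.pow 2).circleIntegrable'
    simp only [Function.comp_def, Complex.reCLM_apply] at this
    rw [this, hsq, Complex.zero_re]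
  rw [← sub_eq_zero, ← circleAverage_fun_sub (f₁ := fun z => (f z).re ^ 2)
    (f₂ := fun z => (f z).im ^ 2)
    ((Complex.continuous_re.comp_continuousOn hsph).pow 2).circleIntegrable'
    ((Complex.continuous_im.comp_continuousOn hsph).pow 2).circleIntegrable', ← hre]
  simp only [sq, Complex.mul_re]

theorem circleAverage_norm_le_sqrt_two_mul {f : ℂ → ℂ} {c : ℂ} {R M : ℝ}
    (hf : DiffContOnCl ℂ f (ball c |R|)) (hfc : f c = 0)
    (hM : ∀ z ∈ sphere c |R|, |(f z).im| ≤ M) :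
    circleAverage (fun z => ‖f z‖) c R ≤ √2 * M := by
  have hM0 : 0 ≤ M := (abs_nonneg _).trans (hM _ (circleMap_mem_sphere' c R 0))
  have hsph : ContinuousOn f (sphere c |R|) := hf.continuousOn_ball.mono sphere_subset_closedBall
  have hre : ContinuousOn (fun z => (f z).re ^ 2) (sphere c |R|) :=
    (Complex.continuous_re.comp_continuousOn hsph).pow 2
  have him : ContinuousOn (fun z => (f z).im ^ 2) (sphere c |R|) :=
    (Complex.continuous_im.comp_continuousOn hsph).pow 2
  have hnorm_sq : circleAverage (fun z => ‖f z‖ ^ 2) c R =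
      2 * circleAverage (fun z => (f z).im ^ 2) c R := by
    simp only [← Complex.normSq_eq_norm_sq, Complex.normSq_apply, ← sq]
    rw [circleAverage_fun_add hre.circleIntegrable' him.circleIntegrable',
      circleAverage_re_sq_eq_circleAverage_im_sq hf hfc, two_mul]
  have him_le : circleAverage (fun z => (f z).im ^ 2) c R ≤ M ^ 2 :=
    circleAverage_mono_on_of_le_circle him.circleIntegrable' fun z hz =>
      sq_le_sq' (abs_le.mp (hM z hz)).1 (abs_le.mp (hM z hz)).2
  calc circleAverage (fun z => ‖f z‖) c R
      ≤ √(circleAverage (fun z => ‖f z‖ ^ 2) c R) :=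
        le_sqrt_of_sq_le (sq_circleAverage_le_circleAverage_sq
          hsph.norm.circleIntegrable' (hsph.norm.pow 2).circleIntegrable')
    _ ≤ √(2 * M ^ 2) := sqrt_le_sqrt (by rw [hnorm_sq]; linarith)
    _ = √2 * M := by rw [sqrt_mul zero_le_two, sqrt_sq hM0]

theorem norm_iteratedDeriv_le_factorial_mul_circleAverage_norm {E : Type*}
    [NormedAddCommGroup E] [NormedSpace ℂ E] [CompleteSpace E] {f : ℂ → E} {c : ℂ} {R : ℝ} (n : ℕ)
    (hR : 0 < R) (hf : DifferentiableOn ℂ f (closedBall c R)) :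
    ‖iteratedDeriv n f c‖ ≤ n.factorial * circleAverage (fun z => ‖f z‖) c R / R ^ n := by
  have hcoeff := (hf.hasFPowerSeriesOnBall (R := ⟨R, hR.le⟩) hR).factorial_smul 1 n
  rw [iteratedFDeriv_apply_eq_iteratedDeriv_mul_prod, Finset.prod_const_one, one_smul] at hcoeff
  have hR' : |R|⁻¹ ^ n = 1 / R ^ n := by rw [abs_of_pos hR, inv_pow, one_div]
  calc ‖iteratedDeriv n f c‖
      = n.factorial * ‖cauchyPowerSeries f c R n fun _ => 1‖ := by
        rw [← hcoeff, RCLike.norm_nsmul ℂ, nsmul_eq_mul]; rfl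
    _ ≤ n.factorial * ‖cauchyPowerSeries f c R n‖ := by
        gcongr
        exact ((cauchyPowerSeries f c R n).le_opNorm _).trans_eq (by simp)
    _ ≤ n.factorial * (circleAverage (fun z => ‖f z‖) c R * |R|⁻¹ ^ n) := by
        gcongr
        exact norm_cauchyPowerSeries_le f c R n
    _ = n.factorial * circleAverage (fun z => ‖f z‖) c R / R ^ n := by
        rw [hR', mul_one_div, mul_div_assoc]

theorem analytic_imaginary_part_bound_general (n : ℕ) (r σ : ℝ) (hr : 0 < r)
    (E : ℂ → ℂ) (hE : DifferentiableOn ℂ E (Metric.closedBall 0 r))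
    (hE0 : E 0 = ((n : ℝ) ^ 2 : ℂ))
    (hIm : ∀ z ∈ Metric.closedBall (0 : ℂ) r, |(E z).im| ≤ σ * r) :
    (1 / (2 * π)) *
        (∫ t in (0 : ℝ)..(2 * π), ‖E ((r : ℂ) * Complex.exp (Complex.I * (t : ℂ))) -
          ((n : ℝ) ^ 2 : ℂ)‖) ≤ Real.sqrt 2 * σ * r ∧
      ∀ k : ℕ, 1 ≤ k →
        ‖iteratedDeriv k E 0 / (Nat.factorial k : ℂ)‖ ≤ Real.sqrt 2 * σ / r ^ (k - 1) := by
  set F : ℂ → ℂ := fun z => E z - ((n : ℝ) ^ 2 : ℂ)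
  have hF : DifferentiableOn ℂ F (closedBall 0 r) := hE.sub_const _
  have hmean : circleAverage (fun z => ‖F z‖) 0 r ≤ √2 * σ * r := by
    rw [mul_assoc]
    refine circleAverage_norm_le_sqrt_two_mul (hF.diffContOnCl_ball ?_) (by simp [F, hE0])
      fun z hz => ?_
    · rw [abs_of_pos hr]
    · rw [abs_of_pos hr] at hz
      simpa [F, sq] using hIm z (sphere_subset_closedBall hz)
  refine ⟨?_, fun k hk => ?_⟩
  · convert hmean using 1
    simp [circleAverage_def, circleMap, F, mul_comm]
  · have hderiv : iteratedDeriv k E 0 = iteratedDeriv k F 0 := by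
      simpa [F, sub_eq_neg_add] using (iteratedDeriv_const_add hk (-((n : ℝ) ^ 2 : ℂ))).symm
    rw [norm_div, hderiv, Complex.norm_natCast, div_le_iff₀ (by positivity)]
    calc ‖iteratedDeriv k F 0‖ ≤ k.factorial * circleAverage (fun z => ‖F z‖) 0 r / r ^ k :=
          norm_iteratedDeriv_le_factorial_mul_circleAverage_norm k hr hF
      _ ≤ k.factorial * (√2 * σ * r) / r ^ k := by gcongr
      _ = √2 * σ / r ^ (k - 1) * k.factorial := by
        obtain ⟨j, rfl⟩ : ∃ j, k = j + 1 := ⟨k - 1, by omega⟩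
        rw [Nat.add_sub_cancel, pow_succ]
        field_simp

/-- Meixner–Schäfke type estimates (Section 8 of the paper): if `E` is analytic
on the closed disc of radius `r`, `E(0) = n²`, and `|Im E(z)| ≤ σ r` on the disc, then the
mean of `|E − n²|` on the circle of radius `r` is at most `√2 σ r`, and hence the Taylor
coefficients `a_k = E^{(k)}(0)/k!` satisfy `|a_k| ≤ √2 σ / r^{k−1}` for `k ≥ 1`. -/
theorem analytic_imaginary_part_bound (n : ℕ) (r σ : ℝ) (hr : 0 < r) (hσ : 0 ≤ σ)
    (E : ℂ → ℂ) (hE : DifferentiableOn ℂ E (Metric.closedBall 0 r))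
    (hE0 : E 0 = ((n : ℝ) ^ 2 : ℂ))
    (hIm : ∀ z ∈ Metric.closedBall (0 : ℂ) r, |(E z).im| ≤ σ * r) :
    (1 / (2 * π)) *
        (∫ t in (0 : ℝ)..(2 * π), ‖E ((r : ℂ) * Complex.exp (Complex.I * (t : ℂ))) -
          ((n : ℝ) ^ 2 : ℂ)‖) ≤ Real.sqrt 2 * σ * r ∧
      ∀ k : ℕ, 1 ≤ k →
        ‖iteratedDeriv k E 0 / (Nat.factorial k : ℂ)‖ ≤ Real.sqrt 2 * σ / r ^ (k - 1) :=
  analytic_imaginary_part_bound_general n r σ hr E hE hE0 hIm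
end

section
/- Let r ∈ ℓ²(2ℤ) with r(k) ≥ 0, and define σ₁(n,s;m) = ∑_{j_1,…,j_s ≠ n} r(m+j_1)/|n−j_1| · r(j_1+j_2)/|n−j_2| ⋯ r(j_{s−1}+j_s)/|n−j_s| with indices in n+2ℤ. Then for n ≥ 4: (i) σ₁(n,1;m) ≤ ‖r‖ for every m; (ii) σ₁(n,1;m) ≤ ρ̃_n := E_n(r) + 2‖r‖/√n whenever |m−n| ≤ n/2; (iii) σ₁(n,2p;m) ≤ (2‖r‖ρ̃_n)^p and σ₁(n,2p+1;m) ≤ ‖r‖·(2‖r‖ρ̃_n)^p for all p ≥ 1 and all m. -/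
/-!
Unfolding the first index gives `σ₁(n,s+1;m) = ∑_j r(m+j)/|n-j| · σ₁(n,s;j)`, so everything
rests on the one-step sums `∑_j r(m+j)/|n-j|` over parts of `n + 2ℤ`. By Cauchy–Schwarz such a
sum is at most `‖r‖`, since `∑_{k≠0} (2k)⁻² ≤ 1`; over the `j` with `|j-n| ≤ n/2` it is at most
`E_n(r)` as soon as `|m-n| ≤ n/2`, because then `m + j ≥ n`; over the other `j` it is at most
`2‖r‖/√n`, since `∑_{|k|>n/4} (2k)⁻² ≤ 4/n`. Two steps of the recursion, split according to
whether the first index lies near `n`, therefore cost at most a factor `2‖r‖ρ̃_n`.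
-/

/-- The indices `j₁,…,j_s` range over `n + 2ℤ` without `n`; the sum is taken in `ℝ≥0∞`, so it
always exists. -/
noncomputable def sigmaOne (r : ℤ → ℝ) (n : ℕ) (s : ℕ) (m : ℤ) : ENNReal :=
  ∑' j : {f : Fin s → ℤ // ∀ ν, f ν % 2 = (n : ℤ) % 2 ∧ f ν ≠ (n : ℤ)},
    ENNReal.ofReal (∏ ν : Fin s,
      r ((Fin.cons m j.1 : Fin (s + 1) → ℤ) ν.castSucc +
          (Fin.cons m j.1 : Fin (s + 1) → ℤ) ν.succ) /
        |(n : ℝ) - ((j.1 ν : ℤ) : ℝ)|)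

open scoped ENNReal

namespace ENNReal

theorem tsum_mul_le_mul_of_tsum_sq_le {ι : Type*} {f g : ι → ℝ≥0∞} {a b : ℝ≥0∞}
    (hf : ∑' i, f i ^ 2 ≤ a ^ 2) (hg : ∑' i, g i ^ 2 ≤ b ^ 2) : ∑' i, f i * g i ≤ a * b := by
  have partial_le (h : ι → ℝ≥0∞) (c : ℝ≥0∞) (hc : ∑' i, h i ^ 2 ≤ c ^ 2) (s : Finset ι) :
      (∑ i ∈ s, h i ^ (2 : ℝ)) ^ (1 / 2 : ℝ) ≤ c := by
    calc (∑ i ∈ s, h i ^ (2 : ℝ)) ^ (1 / 2 : ℝ) ≤ (c ^ (2 : ℝ)) ^ (1 / 2 : ℝ) := by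
          gcongr
          simpa using (ENNReal.sum_le_tsum s).trans hc
      _ = c := by rw [← ENNReal.rpow_mul]; norm_num
  rw [ENNReal.tsum_eq_iSup_sum]
  exact iSup_le fun s => (inner_le_Lp_mul_Lq s f g .two_two).trans
    (mul_le_mul' (partial_le f a hf s) (partial_le g b hg s))

theorem tsum_int_natAbs_le (g : ℕ → ℝ≥0∞) : ∑' k : ℤ, g k.natAbs ≤ 2 * ∑' i, g i := by
  rw [tsum_of_nat_of_neg_add_one ENNReal.summable ENNReal.summable, two_mul]
  refine add_le_add (by simp) ?_
  have hneg (k : ℕ) : (-((k : ℤ) + 1)).natAbs = k + 1 := by omega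
  simpa only [hneg] using ENNReal.tsum_comp_le_tsum_of_injective Nat.succ_injective g

theorem tsum_subtype_le_inter_add_diff {α : Type*} (f : α → ℝ≥0∞) (s t : Set α) :
    ∑' x : s, f x ≤ ∑' x : ↑(s ∩ t), f x + ∑' x : ↑(s \ t), f x :=
  (tsum_congr_set_coe f (Set.inter_union_sdiff s t).symm).trans_le (tsum_union_le f _ _)

end ENNReal

theorem tsum_indicator_Ioi_inv_two_mul_sq_le (d : ℕ) :
    ∑' i : ℕ, (Set.Ioi d).indicator (fun i : ℕ => ENNReal.ofReal ((2 * i : ℝ) ^ 2)⁻¹) i ≤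
      ENNReal.ofReal (1 / (2 * (d + 1))) := by
  refine ENNReal.tsum_le_of_sum_range_le fun N => ?_
  have hfilter : (Finset.range N).filter (· ∈ Set.Ioi d) = Finset.Ioo d N := by
    ext i; simp [and_comm]
  rw [Finset.sum_indicator_eq_sum_filter, hfilter,
    ← ENNReal.ofReal_sum_of_nonneg fun i _ => by positivity]
  refine ENNReal.ofReal_le_ofReal ?_
  calc ∑ i ∈ Finset.Ioo d N, ((2 * i : ℝ) ^ 2)⁻¹
      = 4⁻¹ * ∑ i ∈ Finset.Ioo d N, ((i : ℝ) ^ 2)⁻¹ := by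
        rw [Finset.mul_sum]; congr! 1 with i; rw [mul_pow, mul_inv]; norm_num
    _ ≤ 4⁻¹ * (2 / (d + 1)) := by gcongr; exact sum_Ioo_inv_sq_le d N
    _ = 1 / (2 * (d + 1)) := by field_simp; norm_num

/-- The substitution `j = n - 2k` turns this into `2 ∑_{k > d} (2k)⁻² ≤ 1 / (d + 1)`. -/
theorem tsum_inv_sq_sub_le {n : ℤ} {d : ℕ} {s : Set ℤ}
    (hs : ∀ j ∈ s, j % 2 = n % 2 ∧ 2 * (d : ℝ) < |(n - j : ℝ)|) :
    ∑' j : s, ENNReal.ofReal ((n - j : ℝ) ^ 2)⁻¹ ≤ ENNReal.ofReal (1 / (d + 1)) := by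
  set g := (Set.Ioi d).indicator fun i : ℕ => ENNReal.ofReal ((2 * i : ℝ) ^ 2)⁻¹ with hg
  have hhalf (j : s) : n - j = 2 * ((n - j) / 2) := by have := (hs j j.2).1; omega
  have hterm (j : s) : ENNReal.ofReal ((n - j : ℝ) ^ 2)⁻¹ = g ((n - j) / 2 : ℤ).natAbs := by
    have hcast : (n - j : ℝ) = 2 * (((n - j) / 2 : ℤ) : ℝ) := by exact_mod_cast hhalf j
    have habs : |(n - j : ℝ)| = 2 * (((n - j) / 2 : ℤ).natAbs : ℝ) := by
      rw [hcast, abs_mul, abs_two, Nat.cast_natAbs, Int.cast_abs]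
    have hd : d < ((n - j) / 2 : ℤ).natAbs := by
      have := (hs j j.2).2
      rw [habs] at this
      exact_mod_cast (by linarith : (d : ℝ) < ((n - j) / 2 : ℤ).natAbs)
    rw [hg, Set.indicator_of_mem (Set.mem_Ioi.2 hd), ← sq_abs, habs]
  have hinj : Function.Injective fun j : s => ((n - j) / 2 : ℤ) := by
    intro j j' h
    have := hhalf j; have := hhalf j'
    exact Subtype.ext (by simp only at h; omega)
  calc ∑' j : s, ENNReal.ofReal ((n - j : ℝ) ^ 2)⁻¹
      = ∑' j : s, g ((n - j) / 2 : ℤ).natAbs := tsum_congr hterm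
    _ ≤ ∑' k : ℤ, g k.natAbs := ENNReal.tsum_comp_le_tsum_of_injective hinj (fun k => g k.natAbs)
    _ ≤ 2 * ENNReal.ofReal (1 / (2 * (d + 1))) := by
        grw [ENNReal.tsum_int_natAbs_le g, tsum_indicator_Ioi_inv_two_mul_sq_le d]
    _ = ENNReal.ofReal (1 / (d + 1)) := by
        rw [← ENNReal.ofReal_ofNat 2, ← ENNReal.ofReal_mul (by norm_num)]
        congr 1; field_simp

theorem tsum_ofReal_comp_sq_le {ι α : Type*} {r : ι → ℝ} (hr : ∀ i, 0 ≤ r i)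
    (hsum : Summable fun i => r i ^ 2) {e : α → ι} (he : Function.Injective e) :
    ∑' a, ENNReal.ofReal (r (e a)) ^ 2 ≤ ENNReal.ofReal √(∑' i, r i ^ 2) ^ 2 := by
  rw [← ENNReal.ofReal_pow (Real.sqrt_nonneg _), Real.sq_sqrt (tsum_nonneg fun i => sq_nonneg _),
    ENNReal.ofReal_tsum_of_nonneg (fun i => sq_nonneg _) hsum]
  simp_rw [← ENNReal.ofReal_pow (hr _)]
  exact ENNReal.tsum_comp_le_tsum_of_injective he _

def puncturedCoset (n : ℕ) : Set ℤ := {j | j % 2 = (n : ℤ) % 2 ∧ j ≠ n}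

def halfBall (n : ℕ) : Set ℤ := {j | |(j : ℝ) - n| ≤ n / 2}

noncomputable def sigmaWeight (r : ℤ → ℝ) (n : ℕ) (m j : ℤ) : ℝ≥0∞ :=
  ENNReal.ofReal (r (m + j) / |(n : ℝ) - j|)

/-- `‖r‖`. -/
noncomputable def l2Norm (r : ℤ → ℝ) : ℝ := √(∑' k, r k ^ 2)

/-- `E_n(r)`. -/
noncomputable def tailNorm (r : ℤ → ℝ) (n : ℕ) : ℝ := √(∑' i : {i : ℤ // (n : ℤ) ≤ i}, r i.1 ^ 2)

/-- `ρ̃_n`. -/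
noncomputable def rhoTilde (r : ℤ → ℝ) (n : ℕ) : ℝ := tailNorm r n + 2 * l2Norm r / √n

theorem l2Norm_nonneg (r : ℤ → ℝ) : 0 ≤ l2Norm r := Real.sqrt_nonneg _

theorem tailNorm_nonneg (r : ℤ → ℝ) (n : ℕ) : 0 ≤ tailNorm r n := Real.sqrt_nonneg _

theorem rhoTilde_nonneg (r : ℤ → ℝ) (n : ℕ) : 0 ≤ rhoTilde r n := by
  have := l2Norm_nonneg r
  have := tailNorm_nonneg r n
  unfold rhoTilde
  positivity

theorem tsum_inv_sq_sub_le_one {n : ℕ} {s : Set ℤ} (hs : s ⊆ puncturedCoset n) :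
    ∑' j : s, ENNReal.ofReal ((n - j : ℝ) ^ 2)⁻¹ ≤ 1 := by
  refine (tsum_inv_sq_sub_le (n := n) (d := 0) fun j hj => ⟨(hs hj).1, ?_⟩).trans (by simp)
  have hne : (n : ℝ) - j ≠ 0 := sub_ne_zero.2 (by exact_mod_cast (hs hj).2.symm)
  simpa using hne

theorem tsum_inv_sq_sub_le_of_subset_compl_halfBall {n : ℕ} (hn : 0 < n) {s : Set ℤ}
    (hs : s ⊆ puncturedCoset n \ halfBall n) :
    ∑' j : s, ENNReal.ofReal ((n - j : ℝ) ^ 2)⁻¹ ≤ ENNReal.ofReal (2 / √n) ^ 2 := by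
  have hfar (j : ℤ) (hj : j ∈ s) : 2 * ((n / 4 : ℕ) : ℝ) < |(n - j : ℝ)| := by
    have hj' : (n : ℝ) / 2 < |(j : ℝ) - n| := not_le.1 (hs hj).2
    have hdiv : ((n / 4 : ℕ) : ℝ) ≤ n / 4 := Nat.cast_div_le
    rw [abs_sub_comm] at hj'
    linarith
  refine (tsum_inv_sq_sub_le (n := n) fun j hj => ⟨(hs hj).1.1, hfar j hj⟩).trans ?_
  rw [← ENNReal.ofReal_pow (by positivity), div_pow, Real.sq_sqrt n.cast_nonneg]
  refine ENNReal.ofReal_le_ofReal ?_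
  have hlt : (n : ℝ) < 4 * ((n / 4 : ℕ) + 1) := by exact_mod_cast (by omega : n < 4 * (n / 4 + 1))
  rw [div_le_div_iff₀ (by positivity) (by exact_mod_cast hn)]
  linarith

section Weights

variable {r : ℤ → ℝ} {n : ℕ} {m : ℤ} {s : Set ℤ}

theorem tsum_sigmaWeight_le {a b : ℝ≥0∞}
    (ha : ∑' j : s, ENNReal.ofReal (r (m + j)) ^ 2 ≤ a ^ 2)
    (hb : ∑' j : s, ENNReal.ofReal ((n - j : ℝ) ^ 2)⁻¹ ≤ b ^ 2) :
    ∑' j : s, sigmaWeight r n m j ≤ a * b := by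
  have hsplit (j : ℤ) : sigmaWeight r n m j =
      ENNReal.ofReal (r (m + j)) * ENNReal.ofReal |(n : ℝ) - j|⁻¹ := by
    rw [sigmaWeight, div_eq_mul_inv, ENNReal.ofReal_mul' (by positivity)]
  have hsq (j : ℤ) : ENNReal.ofReal |(n : ℝ) - j|⁻¹ ^ 2 = ENNReal.ofReal ((n - j : ℝ) ^ 2)⁻¹ := by
    rw [← ENNReal.ofReal_pow (by positivity), inv_pow, sq_abs]
  simp_rw [hsplit]
  exact ENNReal.tsum_mul_le_mul_of_tsum_sq_le ha (by simpa only [hsq] using hb)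

variable (hr : ∀ k, 0 ≤ r k) (hsum : Summable fun k => r k ^ 2)
include hr hsum

theorem tsum_sq_comp_add_le_l2Norm :
    ∑' j : s, ENNReal.ofReal (r (m + j)) ^ 2 ≤ ENNReal.ofReal (l2Norm r) ^ 2 := by
  rw [l2Norm]
  exact tsum_ofReal_comp_sq_le hr hsum ((add_right_injective m).comp Subtype.val_injective)

theorem tsum_sigmaWeight_le_l2Norm (hs : s ⊆ puncturedCoset n) :
    ∑' j : s, sigmaWeight r n m j ≤ ENNReal.ofReal (l2Norm r) := by
  simpa using tsum_sigmaWeight_le (tsum_sq_comp_add_le_l2Norm hr hsum)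
    ((tsum_inv_sq_sub_le_one hs).trans_eq (one_pow 2).symm)

theorem tsum_sigmaWeight_le_tailNorm (hs : s ⊆ puncturedCoset n ∩ halfBall n)
    (hm : |(m : ℝ) - n| ≤ n / 2) :
    ∑' j : s, sigmaWeight r n m j ≤ ENNReal.ofReal (tailNorm r n) := by
  have hle (j : s) : (n : ℤ) ≤ m + j := by
    have hj : |(j : ℝ) - n| ≤ n / 2 := (hs j.2).2
    rw [abs_le] at hj hm
    exact_mod_cast (by linarith : (n : ℝ) ≤ m + j)
  have hinj : Function.Injective fun j : s => (⟨m + j, hle j⟩ : {i : ℤ // (n : ℤ) ≤ i}) :=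
    fun j j' h => Subtype.ext (by simpa using congrArg Subtype.val h)
  have ha : ∑' j : s, ENNReal.ofReal (r (m + j)) ^ 2 ≤ ENNReal.ofReal (tailNorm r n) ^ 2 := by
    rw [tailNorm]
    exact tsum_ofReal_comp_sq_le (r := fun i : {i : ℤ // (n : ℤ) ≤ i} => r i)
      (fun i => hr i) (hsum.subtype _) hinj
  simpa using tsum_sigmaWeight_le ha
    ((tsum_inv_sq_sub_le_one (hs.trans Set.inter_subset_left)).trans_eq (one_pow 2).symm)

theorem tsum_sigmaWeight_le_of_subset_compl_halfBall (hn : 0 < n)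
    (hs : s ⊆ puncturedCoset n \ halfBall n) :
    ∑' j : s, sigmaWeight r n m j ≤ ENNReal.ofReal (2 * l2Norm r / √n) := by
  refine (tsum_sigmaWeight_le (tsum_sq_comp_add_le_l2Norm hr hsum)
    (tsum_inv_sq_sub_le_of_subset_compl_halfBall hn hs)).trans_eq ?_
  rw [← ENNReal.ofReal_mul (l2Norm_nonneg r), mul_div_assoc', mul_comm]

end Weights

def consPuncturedCoset (n s : ℕ) :
    puncturedCoset n × {f : Fin s → ℤ // ∀ ν, f ν ∈ puncturedCoset n} ≃
      {f : Fin (s + 1) → ℤ // ∀ ν, f ν ∈ puncturedCoset n} where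
  toFun p := ⟨Fin.cons p.1 p.2.1, Fin.cases p.1.2 p.2.2⟩
  invFun f := (⟨f.1 0, f.2 0⟩, ⟨Fin.tail f.1, fun ν => f.2 ν.succ⟩)
  left_inv p := by ext <;> simp
  right_inv f := Subtype.ext (Fin.cons_self_tail f.1)

theorem sigmaOne_zero (r : ℤ → ℝ) (n : ℕ) (m : ℤ) : sigmaOne r n 0 m = 1 := by
  simp [sigmaOne]

theorem sigmaOne_succ {r : ℤ → ℝ} (hr : ∀ k, 0 ≤ r k) (n s : ℕ) (m : ℤ) :
    sigmaOne r n (s + 1) m =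
      ∑' j : puncturedCoset n, sigmaWeight r n m j * sigmaOne r n s j := by
  rw [sigmaOne]
  refine ((consPuncturedCoset n s).tsum_eq _).symm.trans ?_
  rw [ENNReal.tsum_prod']
  refine tsum_congr fun j => ?_
  rw [sigmaOne, ← ENNReal.tsum_mul_left]
  refine tsum_congr fun f => ?_
  rw [sigmaWeight, ← ENNReal.ofReal_mul (div_nonneg (hr _) (abs_nonneg _))]
  simp only [consPuncturedCoset, Equiv.coe_fn_mk, Fin.prod_univ_succ, Fin.cons_zero, Fin.cons_succ,
    Fin.castSucc_zero, Fin.castSucc_succ]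

section Estimates

variable {r : ℤ → ℝ} {n : ℕ} (hr : ∀ k, 0 ≤ r k)
include hr

theorem sigmaOne_one (m : ℤ) :
    sigmaOne r n 1 m = ∑' j : puncturedCoset n, sigmaWeight r n m j := by
  simp [sigmaOne_succ hr, sigmaOne_zero]

theorem sigmaOne_succ_le {s : ℕ} {C : ℝ≥0∞} (hC : ∀ j, sigmaOne r n s j ≤ C) (m : ℤ) :
    sigmaOne r n (s + 1) m ≤ sigmaOne r n 1 m * C := by
  rw [sigmaOne_succ hr, sigmaOne_one hr, ← ENNReal.tsum_mul_right]
  gcongr with j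
  exact hC j

variable (hsum : Summable fun k => r k ^ 2)
include hsum

theorem sigmaOne_one_le_l2Norm (m : ℤ) : sigmaOne r n 1 m ≤ ENNReal.ofReal (l2Norm r) := by
  rw [sigmaOne_one hr]
  exact tsum_sigmaWeight_le_l2Norm hr hsum subset_rfl

theorem sigmaOne_one_le_rhoTilde (hn : 0 < n) {m : ℤ} (hm : |(m : ℝ) - n| ≤ n / 2) :
    sigmaOne r n 1 m ≤ ENNReal.ofReal (rhoTilde r n) := by
  rw [sigmaOne_one hr, rhoTilde, ENNReal.ofReal_add (tailNorm_nonneg r n)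
    (div_nonneg (mul_nonneg zero_le_two (l2Norm_nonneg r)) (Real.sqrt_nonneg _))]
  exact (ENNReal.tsum_subtype_le_inter_add_diff _ _ (halfBall n)).trans <| add_le_add
    (tsum_sigmaWeight_le_tailNorm hr hsum subset_rfl hm)
    (tsum_sigmaWeight_le_of_subset_compl_halfBall hr hsum hn subset_rfl)

/-- Near `n` the inner sum is at most `ρ̃_n`; away from `n` the outer weight sums to at most
`2‖r‖/√n ≤ ρ̃_n`. Either way each of the two halves contributes `‖r‖ ρ̃_n C`. -/
theorem sigmaOne_add_two_le (hn : 0 < n) {s : ℕ} {C : ℝ≥0∞} (hC : ∀ j, sigmaOne r n s j ≤ C)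
    (m : ℤ) :
    sigmaOne r n (s + 2) m ≤ ENNReal.ofReal (2 * l2Norm r * rhoTilde r n) * C := by
  set R := ENNReal.ofReal (l2Norm r)
  set ρ := ENNReal.ofReal (rhoTilde r n)
  have hnear (j : ℤ) (hj : j ∈ halfBall n) : sigmaOne r n (s + 1) j ≤ ρ * C :=
    (sigmaOne_succ_le hr hC j).trans (by gcongr; exact sigmaOne_one_le_rhoTilde hr hsum hn hj)
  have hfar (j : ℤ) : sigmaOne r n (s + 1) j ≤ R * C :=
    (sigmaOne_succ_le hr hC j).trans (by gcongr; exact sigmaOne_one_le_l2Norm hr hsum j)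
  have hfar_weight : ENNReal.ofReal (2 * l2Norm r / √n) ≤ ρ :=
    ENNReal.ofReal_le_ofReal (le_add_of_nonneg_left (tailNorm_nonneg r n))
  rw [sigmaOne_succ hr]
  calc ∑' j : puncturedCoset n, sigmaWeight r n m j * sigmaOne r n (s + 1) j
      ≤ ∑' j : ↑(puncturedCoset n ∩ halfBall n), sigmaWeight r n m j * sigmaOne r n (s + 1) j +
        ∑' j : ↑(puncturedCoset n \ halfBall n), sigmaWeight r n m j * sigmaOne r n (s + 1) j :=
        ENNReal.tsum_subtype_le_inter_add_diff
          (fun j => sigmaWeight r n m j * sigmaOne r n (s + 1) j) _ _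
    _ ≤ (∑' j : ↑(puncturedCoset n ∩ halfBall n), sigmaWeight r n m j) * (ρ * C) +
        (∑' j : ↑(puncturedCoset n \ halfBall n), sigmaWeight r n m j) * (R * C) := by
        rw [← ENNReal.tsum_mul_right, ← ENNReal.tsum_mul_right]
        gcongr with j j
        exacts [hnear j j.2.2, hfar j]
    _ ≤ R * (ρ * C) + ρ * (R * C) := by
        gcongr
        exacts [tsum_sigmaWeight_le_l2Norm hr hsum Set.inter_subset_left,
          (tsum_sigmaWeight_le_of_subset_compl_halfBall hr hsum hn subset_rfl).trans hfar_weight]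
    _ = ENNReal.ofReal (2 * l2Norm r * rhoTilde r n) * C := by
        rw [ENNReal.ofReal_mul (mul_nonneg zero_le_two (l2Norm_nonneg r)),
          ENNReal.ofReal_mul zero_le_two, ENNReal.ofReal_ofNat]
        ring

theorem sigmaOne_two_mul_le (hn : 0 < n) (p : ℕ) (m : ℤ) :
    sigmaOne r n (2 * p) m ≤ ENNReal.ofReal ((2 * l2Norm r * rhoTilde r n) ^ p) := by
  have := l2Norm_nonneg r
  have := rhoTilde_nonneg r n
  induction p generalizing m with
  | zero => simp [sigmaOne_zero]
  | succ p ih =>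
    rw [mul_add_one, pow_succ', ENNReal.ofReal_mul (by positivity)]
    exact sigmaOne_add_two_le hr hsum hn ih m

theorem sigmaOne_two_mul_add_one_le (hn : 0 < n) (p : ℕ) (m : ℤ) :
    sigmaOne r n (2 * p + 1) m ≤
      ENNReal.ofReal (l2Norm r * (2 * l2Norm r * rhoTilde r n) ^ p) := by
  rw [ENNReal.ofReal_mul (l2Norm_nonneg r)]
  exact (sigmaOne_succ_le hr (sigmaOne_two_mul_le hr hsum hn p) m).trans
    (by gcongr; exact sigmaOne_one_le_l2Norm hr hsum m)

end Estimates

/-- Lemma p2 of the Appendix, estimates (p2) and (p3) for `σ₁(n,s;m)`,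
with `ρ̃_n = E_n(r) + 2‖r‖/√n`. -/
theorem sigmaOne_estimates (r : ℤ → ℝ) (hr : ∀ k, 0 ≤ r k)
    (hsum : Summable (fun k => (r k) ^ 2)) (n : ℕ) (hn : 4 ≤ n) :
    (∀ m : ℤ, m % 2 = (n : ℤ) % 2 →
        sigmaOne r n 1 m ≤ ENNReal.ofReal (Real.sqrt (∑' k : ℤ, (r k) ^ 2))) ∧
    (∀ m : ℤ, m % 2 = (n : ℤ) % 2 → |(m : ℝ) - (n : ℝ)| ≤ (n : ℝ) / 2 →
        sigmaOne r n 1 m ≤ ENNReal.ofReal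
          (Real.sqrt (∑' i : {i : ℤ // (n : ℤ) ≤ i}, (r i.1) ^ 2) +
            2 * Real.sqrt (∑' k : ℤ, (r k) ^ 2) / Real.sqrt n)) ∧
    (∀ p : ℕ, 1 ≤ p → ∀ m : ℤ, m % 2 = (n : ℤ) % 2 →
        sigmaOne r n (2 * p) m ≤ ENNReal.ofReal
          ((2 * Real.sqrt (∑' k : ℤ, (r k) ^ 2) *
            (Real.sqrt (∑' i : {i : ℤ // (n : ℤ) ≤ i}, (r i.1) ^ 2) +
              2 * Real.sqrt (∑' k : ℤ, (r k) ^ 2) / Real.sqrt n)) ^ p) ∧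
        sigmaOne r n (2 * p + 1) m ≤ ENNReal.ofReal
          (Real.sqrt (∑' k : ℤ, (r k) ^ 2) *
            (2 * Real.sqrt (∑' k : ℤ, (r k) ^ 2) *
              (Real.sqrt (∑' i : {i : ℤ // (n : ℤ) ≤ i}, (r i.1) ^ 2) +
                2 * Real.sqrt (∑' k : ℤ, (r k) ^ 2) / Real.sqrt n)) ^ p)) := by
  have hpos : 0 < n := by omega
  exact ⟨fun m _ => sigmaOne_one_le_l2Norm hr hsum m,
    fun m _ hm => sigmaOne_one_le_rhoTilde hr hsum hpos hm,
    fun p _ m _ => ⟨sigmaOne_two_mul_le hr hsum hpos p m,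
      sigmaOne_two_mul_add_one_le hr hsum hpos p m⟩⟩
end

section
/- Let r ∈ ℓ²(2ℤ) with r(k) ≥ 0 and define σ₂(n,2;m) = ∑_{j_2 ≠ ±n} |n²−j_2²|^{-1} ∑_{j_1 ≠ ±n} r(m+j_1) r(j_1+j_2), indices in n+2ℤ. Then σ₂(n,2;m) ≤ ‖r‖² · (2 log 6n)/n for every n ∈ ℕ and m ∈ n+2ℤ. -/
/-!
By AM–GM, `r a * r b ≤ (r a ^ 2 + r b ^ 2) / 2`, and both shifts `j₁ ↦ m + j₁`, `j₁ ↦ j₁ + j₂` are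
injective, so the inner sum is at most `‖r‖²`. For the weights, `j = n - 2k` turns `n² - j²` into
`4k(n - k)`. The partial fractions `1 / (k(n - k)) = (1/k + 1/(n - k)) / n` give at most `2 H_n / n`
for `0 ≤ k ≤ n`, while on each tail `k > n`, `k < 0` they telescope to at most `H_n / n`. Hence the
weight sum is at most `H_n / n ≤ (1 + log n) / n ≤ 2 log (6n) / n`.
-/

open scoped ENNReal
open Finset Function

theorem ENNReal.ofReal_mul_le_add_div_two (x y : ℝ) :
    ENNReal.ofReal (x * y) ≤ (ENNReal.ofReal (x ^ 2) + ENNReal.ofReal (y ^ 2)) / 2 := by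
  rw [← ENNReal.ofReal_add (sq_nonneg x) (sq_nonneg y), ← ENNReal.ofReal_ofNat 2,
    ← ENNReal.ofReal_div_of_pos two_pos]
  exact ENNReal.ofReal_le_ofReal (by nlinarith [sq_nonneg (x - y)])

theorem tsum_ofReal_mul_comp_le {α ι : Type*} {r : α → ℝ} (hr : Summable fun k => r k ^ 2)
    {u v : ι → α} (hu : Injective u) (hv : Injective v) :
    ∑' i, ENNReal.ofReal (r (u i) * r (v i)) ≤ ENNReal.ofReal (∑' k, r k ^ 2) := by
  have hsq {w : ι → α} (hw : Injective w) :
      ∑' i, ENNReal.ofReal (r (w i) ^ 2) ≤ ENNReal.ofReal (∑' k, r k ^ 2) := by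
    rw [ENNReal.ofReal_tsum_of_nonneg (fun k => sq_nonneg _) hr]
    exact ENNReal.tsum_comp_le_tsum_of_injective hw fun k => ENNReal.ofReal (r k ^ 2)
  calc ∑' i, ENNReal.ofReal (r (u i) * r (v i))
      ≤ ∑' i, (ENNReal.ofReal (r (u i) ^ 2) + ENNReal.ofReal (r (v i) ^ 2)) / 2 :=
        ENNReal.tsum_le_tsum fun i => ENNReal.ofReal_mul_le_add_div_two _ _
    _ = (∑' i, ENNReal.ofReal (r (u i) ^ 2) + ∑' i, ENNReal.ofReal (r (v i) ^ 2)) / 2 := by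
        simp only [div_eq_mul_inv, ENNReal.tsum_mul_right, ENNReal.tsum_add]
    _ ≤ (ENNReal.ofReal (∑' k, r k ^ 2) + ENNReal.ofReal (∑' k, r k ^ 2)) / 2 := by
        gcongr
        exacts [hsq hu, hsq hv]
    _ = ENNReal.ofReal (∑' k, r k ^ 2) := by rw [ENNReal.add_div, ENNReal.add_halves]

theorem tsum_subtype_emod_two_le (f : ℤ → ℝ≥0∞) (c : ℤ) (p : ℤ → Prop) :
    ∑' j : {j : ℤ // j % 2 = c % 2 ∧ p j}, f j ≤ ∑' k : ℤ, f (c - 2 * k) := by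
  have hf (j : {j : ℤ // j % 2 = c % 2 ∧ p j}) : f j = f (c - 2 * ((c - j) / 2)) := by
    have := j.2.1
    congr 1
    omega
  rw [tsum_congr hf]
  refine ENNReal.tsum_comp_le_tsum_of_injective (fun a b hab => Subtype.ext ?_) _
  have := a.2.1
  have := b.2.1
  omega

theorem inv_mul_le_inv_add_inv_div {a b : ℝ} (ha : 0 ≤ a) (hb : 0 ≤ b) :
    (a * b)⁻¹ ≤ (a⁻¹ + b⁻¹) / (a + b) := by
  rcases ha.eq_or_lt with rfl | ha
  · simp only [zero_mul, inv_zero, zero_add]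
    positivity
  rcases hb.eq_or_lt with rfl | hb
  · simp only [mul_zero, inv_zero, add_zero]
    positivity
  rw [inv_add_inv ha.ne' hb.ne', div_div, mul_comm (a * b), ← div_div, div_self (by positivity),
    one_div]

theorem harmonic_eq_sum_range_succ_inv (n : ℕ) :
    (harmonic n : ℝ) = ∑ i ∈ range (n + 1), (i : ℝ)⁻¹ := by
  simp [harmonic, sum_range_succ']

theorem sum_range_succ_inv_mul_sub_le (n : ℕ) :
    ∑ i ∈ range (n + 1), ((i : ℝ) * (n - i))⁻¹ ≤ 2 * harmonic n / n := by
  have hcast (i : ℕ) (hi : i ∈ range (n + 1)) : (n : ℝ) - i = ((n - i : ℕ) : ℝ) := by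
    rw [Nat.cast_sub (by simpa [Nat.lt_succ_iff] using hi)]
  calc ∑ i ∈ range (n + 1), ((i : ℝ) * (n - i))⁻¹
      ≤ ∑ i ∈ range (n + 1), ((i : ℝ)⁻¹ + ((n - i : ℕ) : ℝ)⁻¹) / n := by
        refine sum_le_sum fun i hi => ?_
        rw [hcast i hi]
        exact (inv_mul_le_inv_add_inv_div (Nat.cast_nonneg i) (Nat.cast_nonneg (n - i))).trans_eq
          (by rw [← hcast i hi, add_sub_cancel])
    _ = 2 * harmonic n / n := by
        have hreflect :
            ∑ i ∈ range (n + 1), ((n - i : ℕ) : ℝ)⁻¹ = ∑ i ∈ range (n + 1), (i : ℝ)⁻¹ := by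
          rw [← sum_range_reflect]
          refine sum_congr rfl fun i hi => ?_
          rw [mem_range] at hi
          congr 2
          omega
        rw [← sum_div, sum_add_distrib, hreflect, harmonic_eq_sum_range_succ_inv]
        ring

theorem sum_range_inv_succ_mul_succ_add_le {n : ℕ} (hn : 0 < n) (N : ℕ) :
    ∑ i ∈ range N, (((i : ℝ) + 1) * (i + 1 + n))⁻¹ ≤ harmonic n / n := by
  have hpartial (i : ℕ) :
      (((i : ℝ) + 1) * (i + 1 + n))⁻¹ = (((i : ℝ) + 1)⁻¹ - ((n + i : ℕ) + 1 : ℝ)⁻¹) / n := by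
    push_cast
    field_simp
    ring
  have hharmonic (k : ℕ) : (harmonic k : ℝ) = ∑ i ∈ range k, ((i : ℝ) + 1)⁻¹ := by
    simp [harmonic]
  have hmono : ∑ i ∈ range N, ((i : ℝ) + 1)⁻¹ ≤ ∑ i ∈ range (n + N), ((i : ℝ) + 1)⁻¹ :=
    sum_le_sum_of_subset_of_nonneg (range_subset_range.2 (Nat.le_add_left N n))
      fun i _ _ => by positivity
  rw [sum_range_add, ← hharmonic n] at hmono
  rw [sum_congr rfl fun i _ => hpartial i, ← sum_div, sum_sub_distrib]
  gcongr
  linarith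

theorem tsum_ofReal_inv_succ_mul_succ_add_le {n : ℕ} (hn : 0 < n) :
    ∑' i : ℕ, ENNReal.ofReal ((((i : ℝ) + 1) * (i + 1 + n))⁻¹) ≤ ENNReal.ofReal (harmonic n / n) :=
  ENNReal.tsum_le_of_sum_range_le fun N => by
    rw [← ENNReal.ofReal_sum_of_nonneg fun i _ => by positivity]
    exact ENNReal.ofReal_le_ofReal (sum_range_inv_succ_mul_succ_add_le hn N)

theorem harmonic_le_two_mul_log_six_mul {n : ℕ} (hn : 0 < n) :
    (harmonic n : ℝ) ≤ 2 * Real.log (6 * n) := by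
  have hlog6 : 1 ≤ Real.log 6 := by
    rw [Real.le_log_iff_exp_le (by norm_num)]
    linarith [Real.exp_one_lt_d9]
  have hlogn : 0 ≤ Real.log n := Real.log_nonneg (by exact_mod_cast hn)
  rw [Real.log_mul (by norm_num) (by positivity)]
  linarith [harmonic_le_one_add_log n]

-- The terms `k = 0` and `k = n` vanish, since `0⁻¹ = 0`.
theorem tsum_int_ofReal_inv_abs_mul_sub_le {n : ℕ} (hn : 0 < n) :
    ∑' k : ℤ, ENNReal.ofReal |(k : ℝ) * (n - k)|⁻¹ ≤ ENNReal.ofReal (4 * harmonic n / n) := by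
  set f : ℤ → ℝ≥0∞ := fun k => ENNReal.ofReal |(k : ℝ) * (n - k)|⁻¹ with hf
  set tail : ℕ → ℝ≥0∞ := fun i => ENNReal.ofReal ((((i : ℝ) + 1) * (i + 1 + n))⁻¹) with htail
  have hright (i : ℕ) : f ((i + (n + 1) : ℕ) : ℤ) = tail i := by
    simp only [hf, htail]
    push_cast
    rw [show ((i : ℝ) + (n + 1)) * (n - (i + (n + 1))) = -(((i : ℝ) + 1) * (i + 1 + n)) by ring,
      abs_neg, abs_of_pos (by positivity)]
  have hleft (i : ℕ) : f (-((i : ℤ) + 1)) = tail i := by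
    simp only [hf, htail]
    push_cast
    rw [show -((i : ℝ) + 1) * (n - -(i + 1)) = -(((i : ℝ) + 1) * (i + 1 + n)) by ring,
      abs_neg, abs_of_pos (by positivity)]
  have hmiddle : ∑ i ∈ range (n + 1), f i
      = ENNReal.ofReal (∑ i ∈ range (n + 1), ((i : ℝ) * (n - i))⁻¹) := by
    have hnonneg (i : ℕ) (hi : i ∈ range (n + 1)) : 0 ≤ (i : ℝ) * (n - i) := by
      have : (i : ℝ) ≤ n := by exact_mod_cast Nat.lt_succ_iff.1 (mem_range.1 hi)
      nlinarith
    rw [ENNReal.ofReal_sum_of_nonneg fun i hi => inv_nonneg.2 (hnonneg i hi)]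
    refine sum_congr rfl fun i hi => ?_
    simp only [hf, Int.cast_natCast, abs_of_nonneg (hnonneg i hi)]
  have hH : 0 ≤ (harmonic n : ℝ) / n := by
    have := harmonic_pos hn.ne'
    positivity
  have hH2 : 0 ≤ 2 * (harmonic n : ℝ) / n := by
    rw [mul_div_assoc]
    positivity
  calc ∑' k : ℤ, f k
      = ∑ i ∈ range (n + 1), f i + ∑' i : ℕ, tail i + ∑' i : ℕ, tail i := by
        rw [tsum_of_nat_of_neg_add_one ENNReal.summable ENNReal.summable,
          ← ENNReal.summable.sum_add_tsum_nat_add' (f := fun i : ℕ => f i) (k := n + 1)]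
        simp only [hright, hleft]
    _ ≤ ENNReal.ofReal (2 * harmonic n / n) + ENNReal.ofReal (harmonic n / n)
          + ENNReal.ofReal (harmonic n / n) := by
        rw [hmiddle]
        gcongr
        · exact sum_range_succ_inv_mul_sub_le n
        all_goals exact tsum_ofReal_inv_succ_mul_succ_add_le hn
    _ = ENNReal.ofReal (4 * harmonic n / n) := by
        rw [← ENNReal.ofReal_add hH2 hH, ← ENNReal.ofReal_add (add_nonneg hH2 hH) hH]
        ring_nf

theorem tsum_ofReal_one_div_abs_sq_sub_sq_le {n : ℕ} (hn : 0 < n) (p : ℤ → Prop) :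
    ∑' j : {j : ℤ // j % 2 = (n : ℤ) % 2 ∧ p j},
        ENNReal.ofReal (1 / |(n : ℝ) ^ 2 - ((j.1 : ℤ) : ℝ) ^ 2|) ≤ ENNReal.ofReal (harmonic n / n) := by
  have hfactor (k : ℤ) : ENNReal.ofReal (1 / |(n : ℝ) ^ 2 - ((n - 2 * k : ℤ) : ℝ) ^ 2|)
      = ENNReal.ofReal 4⁻¹ * ENNReal.ofReal |(k : ℝ) * (n - k)|⁻¹ := by
    rw [← ENNReal.ofReal_mul (by norm_num)]
    push_cast
    rw [show (n : ℝ) ^ 2 - (n - 2 * k) ^ 2 = 4 * (k * (n - k)) by ring, abs_mul,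
      abs_of_pos four_pos, one_div, mul_inv]
  calc _ ≤ ∑' k : ℤ, ENNReal.ofReal (1 / |(n : ℝ) ^ 2 - ((n - 2 * k : ℤ) : ℝ) ^ 2|) :=
        tsum_subtype_emod_two_le (fun j => ENNReal.ofReal (1 / |(n : ℝ) ^ 2 - (j : ℝ) ^ 2|)) n p
    _ = ENNReal.ofReal 4⁻¹ * ∑' k : ℤ, ENNReal.ofReal |(k : ℝ) * (n - k)|⁻¹ := by
        rw [tsum_congr hfactor, ENNReal.tsum_mul_left]
    _ ≤ ENNReal.ofReal 4⁻¹ * ENNReal.ofReal (4 * harmonic n / n) := by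
        gcongr
        exact tsum_int_ofReal_inv_abs_mul_sub_le hn
    _ = ENNReal.ofReal (harmonic n / n) := by
        rw [← ENNReal.ofReal_mul (by norm_num)]
        ring_nf

theorem sigmaTwo_estimate_general (r : ℤ → ℝ)
    (hsum : Summable (fun k => (r k) ^ 2)) (n : ℕ) (hn : 1 ≤ n)
    (m : ℤ) :
    (∑' j2 : {j : ℤ // j % 2 = (n : ℤ) % 2 ∧ j ≠ (n : ℤ) ∧ j ≠ -(n : ℤ)},
        ENNReal.ofReal (1 / |(n : ℝ) ^ 2 - ((j2.1 : ℤ) : ℝ) ^ 2|) *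
          ∑' j1 : {j : ℤ // j % 2 = (n : ℤ) % 2 ∧ j ≠ (n : ℤ) ∧ j ≠ -(n : ℤ)},
            ENNReal.ofReal (r (m + j1.1) * r (j1.1 + j2.1)))
      ≤ ENNReal.ofReal ((∑' k : ℤ, (r k) ^ 2) * (2 * Real.log (6 * n)) / n) := by
  have hn₀ : 0 < n := hn
  calc _ ≤ ∑' j2 : {j : ℤ // j % 2 = (n : ℤ) % 2 ∧ j ≠ (n : ℤ) ∧ j ≠ -(n : ℤ)},
          ENNReal.ofReal (1 / |(n : ℝ) ^ 2 - ((j2.1 : ℤ) : ℝ) ^ 2|) *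
            ENNReal.ofReal (∑' k : ℤ, (r k) ^ 2) :=
        ENNReal.tsum_le_tsum fun j2 => mul_le_mul_right (tsum_ofReal_mul_comp_le hsum
          (fun _ _ h => Subtype.ext (add_left_cancel h))
          (fun _ _ h => Subtype.ext (add_right_cancel h))) _
    _ ≤ ENNReal.ofReal (harmonic n / n) * ENNReal.ofReal (∑' k : ℤ, (r k) ^ 2) := by
        rw [ENNReal.tsum_mul_right]
        gcongr
        exact tsum_ofReal_one_div_abs_sq_sub_sq_le hn₀ _
    _ ≤ _ := by
        rw [← ENNReal.ofReal_mul' (tsum_nonneg fun k => sq_nonneg (r k)), mul_comm,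
          mul_div_assoc]
        gcongr
        exact harmonic_le_two_mul_log_six_mul hn₀

/-- estimate (p16) of Lemma p3 in the Appendix:
`σ₂(n,2;m) ≤ ‖r‖² (2 log 6n)/n`, with indices in `n + 2ℤ` different from `±n`. -/
theorem sigmaTwo_estimate (r : ℤ → ℝ) (hr : ∀ k, 0 ≤ r k)
    (hsum : Summable (fun k => (r k) ^ 2)) (n : ℕ) (hn : 1 ≤ n)
    (m : ℤ) (hm : m % 2 = (n : ℤ) % 2) :
    (∑' j2 : {j : ℤ // j % 2 = (n : ℤ) % 2 ∧ j ≠ (n : ℤ) ∧ j ≠ -(n : ℤ)},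
        ENNReal.ofReal (1 / |(n : ℝ) ^ 2 - ((j2.1 : ℤ) : ℝ) ^ 2|) *
          ∑' j1 : {j : ℤ // j % 2 = (n : ℤ) % 2 ∧ j ≠ (n : ℤ) ∧ j ≠ -(n : ℤ)},
            ENNReal.ofReal (r (m + j1.1) * r (j1.1 + j2.1)))
      ≤ ENNReal.ofReal ((∑' k : ℤ, (r k) ^ 2) * (2 * Real.log (6 * n)) / n) :=
  sigmaTwo_estimate_general r hsum n hn m
end

section
/- Let v be a real-valued π-periodic potential in H^{-1}_loc(ℝ) and L the associated self-adjoint Hill–Schrödinger operator. With z_n^± the eigenvalue shifts and β_n^±(z) the off-diagonal entries of the reduced 2×2 operator S, there is a sequence η_n ↓ 0 such that for n ≥ n₀(v): (1−η_n)(|β_n^-(z_n^*)| + |β_n^+(z_n^*)|) ≤ γ_n ≤ (1+η_n)(|β_n^-(z_n^*)| + |β_n^+(z_n^*)|), where γ_n = λ_n^+ − λ_n^- and z_n^* = (λ_n^+ + λ_n^-)/2 − n². -/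
open Filter

/-- Lipschitz estimate on a convex set from a pointwise derivative bound. -/
lemma lipC_aux (f f' : ℂ → ℂ) (s : Set ℂ) (hs : Convex ℝ s) (e : ℝ)
    (hf : ∀ z ∈ s, HasDerivAt f (f' z) z) (hb : ∀ z ∈ s, ‖f' z‖ ≤ e)
    {x y : ℂ} (hx : x ∈ s) (hy : y ∈ s) : ‖f y - f x‖ ≤ e * ‖y - x‖ := by
  refine hs.norm_image_sub_le_of_norm_hasFDerivWithin_le
    (f' := fun z => ContinuousLinearMap.smulRight (1 : ℂ →L[ℂ] ℂ) (f' z))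
    (fun z hz => ((hf z hz).hasFDerivAt).hasFDerivWithinAt) (fun z hz => ?_) hx hy
  rw [ContinuousLinearMap.norm_smulRight_apply, norm_one, one_mul]
  exact hb z hz

/-- Real arithmetic core of the two-sided gap estimate. -/
lemma coreR_aux (P M A d B e : ℝ) (hP : 0 ≤ P) (hA : 0 ≤ A) (hB : 0 ≤ B)
    (hd : 0 < d) (he0 : 0 ≤ e) (he1 : e ≤ 1/100)
    (hM1 : d - e*d ≤ M) (hM2 : M ≤ d + e*d)
    (hPM : P * M ≤ e*d*(2*A + e*d))
    (hMA1 : M ≤ 2*A + P) (hMA2 : 2*A ≤ M + P)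
    (hB1 : B ≤ 2*A + e*d) (hB2 : 2*A ≤ B + e*d) :
    (1 - 100*e)*B ≤ d ∧ d ≤ (1+100*e)*B := by
  have hP' : P * (1-e) ≤ e*(2*A+e*d) := by
    have h1 : P * ((1-e)*d) ≤ P * M := by
      apply mul_le_mul_of_nonneg_left _ hP; linarith
    have h2 : (P * (1-e)) * d ≤ (e*(2*A+e*d)) * d := by
      calc (P * (1-e)) * d = P * ((1-e)*d) := by ring
        _ ≤ P * M := h1
        _ ≤ e*d*(2*A + e*d) := hPM
        _ = (e*(2*A+e*d)) * d := by ring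
    exact le_of_mul_le_mul_right h2 hd
  have key1 : d*(1-3*e) ≤ B := by
    nlinarith [mul_le_mul_of_nonneg_left hMA1 (show (0:ℝ) ≤ 1-e by linarith)]
  have key2 : B*(1-2*e) ≤ d*(1+e) := by nlinarith
  constructor
  · nlinarith
  · nlinarith

/-- Theorem 4.1 of the paper (two-sided estimate of the spectral gap for
real-valued `H⁻¹` potentials), formulated in terms of the reduced `2×2` data: `α_n`,
`β_n^±` are the entries of the reduced operator `S(λ;n)`, `z_n^±` are the eigenvalue
shifts, the gap is `γ_n = |λ_n^+ − λ_n^-| = |z_n^+ − z_n^-|` and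
`z_n^* = (z_n^+ + z_n^-)/2`.  The hypotheses encode: localization of `z_n^±`, the basic
equation `(z−α_n(z))² = β_n^-(z)β_n^+(z)` at `z_n^±`, the a priori derivative bounds
`ε_n → 0` on the segment `[z_n^-, z_n^+]`, the self-adjointness symmetry
`|β_n^+(z_n^+)| = |β_n^-(z_n^+)|`, and the degenerate-case correspondence (Remark 2.1).
The conclusion is the two-sided estimate with a sequence `η_n ↓ 0`. -/
theorem real_potential_two_sided_gap_estimate
    (α βp βm α' βp' βm' : ℕ → ℂ → ℂ) (zp zm : ℕ → ℂ) (ε : ℕ → ℝ)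
    (hε0 : ∀ n, 0 ≤ ε n) (hεlim : Tendsto ε atTop (nhds 0))
    (hloc : ∀ n : ℕ, ‖zp n‖ ≤ (n : ℝ) / 4 ∧ ‖zm n‖ ≤ (n : ℝ) / 4)
    (hrootp : ∀ n, (zp n - α n (zp n)) ^ 2 = βm n (zp n) * βp n (zp n))
    (hrootm : ∀ n, (zm n - α n (zm n)) ^ 2 = βm n (zm n) * βp n (zm n))
    (hderiv : ∀ n, ∀ z ∈ segment ℝ (zm n) (zp n),
      HasDerivAt (α n) (α' n z) z ∧ HasDerivAt (βp n) (βp' n z) z ∧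
        HasDerivAt (βm n) (βm' n z) z)
    (hbound : ∀ n, ∀ z ∈ segment ℝ (zm n) (zp n),
      ‖α' n z‖ ≤ ε n ∧ ‖βp' n z‖ ≤ ε n ∧ ‖βm' n z‖ ≤ ε n)
    (hsym : ∀ n, ‖βp n (zp n)‖ = ‖βm n (zp n)‖)
    (hdeg : ∀ n, (βp n (zp n) = 0 ∧ βm n (zp n) = 0) ↔ zp n = zm n) :
    ∃ (η : ℕ → ℝ) (n₀ : ℕ), (∀ n, 0 ≤ η n) ∧ Tendsto η atTop (nhds 0) ∧
      ∀ n : ℕ, n₀ ≤ n →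
        (1 - η n) * (‖βm n ((zp n + zm n) / 2)‖ + ‖βp n ((zp n + zm n) / 2)‖)
            ≤ ‖zp n - zm n‖ ∧
          ‖zp n - zm n‖
            ≤ (1 + η n) * (‖βm n ((zp n + zm n) / 2)‖ + ‖βp n ((zp n + zm n) / 2)‖) := by
  obtain ⟨n₀, hn₀⟩ : ∃ n₀, ∀ n ≥ n₀, ε n ≤ 1/100 :=
    eventually_atTop.mp (hεlim.eventually (eventually_le_nhds (by norm_num)))
  refine ⟨fun n => 100 * ε n, n₀, fun n => by simpa using mul_nonneg (by norm_num : (0:ℝ) ≤ 100) (hε0 n),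
    by simpa using hεlim.const_mul (100:ℝ), fun n hn => ?_⟩
  by_cases hzz : zp n = zm n
  · -- degenerate: gap is zero and β's vanish at z* = zp n
    obtain ⟨h1, h2⟩ := (hdeg n).mpr hzz
    have hmid : (zp n + zm n) / 2 = zp n := by rw [hzz]; ring
    rw [hmid, h1, h2, hzz]
    simp
  -- nondegenerate case
  set s : Set ℂ := segment ℝ (zm n) (zp n) with hs_def
  have hs : Convex ℝ s := convex_segment _ _
  have hzmS : zm n ∈ s := left_mem_segment ℝ _ _
  have hzpS : zp n ∈ s := right_mem_segment ℝ _ _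
  have hmidS : (zp n + zm n)/2 ∈ s := by
    refine ⟨1/2, 1/2, by norm_num, by norm_num, by norm_num, ?_⟩
    rw [Complex.real_smul, Complex.real_smul]; push_cast; ring
  set e := ε n with he_def
  set d := ‖zp n - zm n‖ with hd_def
  have hd : 0 < d := by
    rw [hd_def, norm_pos_iff]; exact sub_ne_zero.mpr hzz
  have he0 : 0 ≤ e := hε0 n
  have he1 : e ≤ 1/100 := hn₀ n hn
  -- Lipschitz bounds
  have lipα : ∀ x ∈ s, ∀ y ∈ s, ‖α n y - α n x‖ ≤ e * ‖y - x‖ :=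
    fun x hx y hy => lipC_aux (α n) (α' n) s hs e
      (fun z hz => (hderiv n z hz).1) (fun z hz => (hbound n z hz).1) hx hy
  have lipβp : ∀ x ∈ s, ∀ y ∈ s, ‖βp n y - βp n x‖ ≤ e * ‖y - x‖ :=
    fun x hx y hy => lipC_aux (βp n) (βp' n) s hs e
      (fun z hz => (hderiv n z hz).2.1) (fun z hz => (hbound n z hz).2.1) hx hy
  have lipβm : ∀ x ∈ s, ∀ y ∈ s, ‖βm n y - βm n x‖ ≤ e * ‖y - x‖ :=
    fun x hx y hy => lipC_aux (βm n) (βm' n) s hs e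
      (fun z hz => (hderiv n z hz).2.2) (fun z hz => (hbound n z hz).2.2) hx hy
  -- abbreviations
  set a := zp n - α n (zp n) with ha_def
  set b := zm n - α n (zm n) with hb_def
  set Bp := βp n (zp n) with hBp_def
  set Bm := βm n (zp n) with hBm_def
  set Cp := βp n (zm n) with hCp_def
  set Cm := βm n (zm n) with hCm_def
  set Sp := βp n ((zp n + zm n)/2) with hSp_def
  set Sm := βm n ((zp n + zm n)/2) with hSm_def
  set A := ‖a‖ with hA_def
  -- distance from zp to midpoint is d/2
  have hhalf : ‖zp n - (zp n + zm n)/2‖ = d/2 := by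
    have : zp n - (zp n + zm n)/2 = (zp n - zm n)/2 := by ring
    rw [this, hd_def]; simp
  -- ‖a‖ = ‖Bp‖ = ‖Bm‖
  have hApBp : A = ‖Bp‖ := by
    have h2 : A^2 = ‖Bp‖^2 := by
      rw [hA_def, ← norm_pow, ha_def, hrootp n, norm_mul, ← hBm_def, ← hBp_def, hsym n]
      ring
    nlinarith [norm_nonneg a, norm_nonneg Bp, sq_nonneg (A - ‖Bp‖), sq_nonneg (A + ‖Bp‖)]
  have hApBm : A = ‖Bm‖ := by rw [hApBp, hsym n]
  -- Lipschitz consequences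
  have hα : ‖α n (zp n) - α n (zm n)‖ ≤ e * d := lipα _ hzmS _ hzpS
  have hβpC : ‖Bp - Cp‖ ≤ e * d := lipβp _ hzmS _ hzpS
  have hβmC : ‖Bm - Cm‖ ≤ e * d := lipβm _ hzmS _ hzpS
  have hβpS : ‖Bp - Sp‖ ≤ e * (d/2) := by
    have := lipβp _ hmidS _ hzpS
    rwa [hhalf] at this
  have hβmS : ‖Bm - Sm‖ ≤ e * (d/2) := by
    have := lipβm _ hmidS _ hzpS
    rwa [hhalf] at this
  -- setup for coreR_aux
  set P := ‖a + b‖ with hP_def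
  set M := ‖a - b‖ with hM_def
  set B := ‖Sm‖ + ‖Sp‖ with hB_def
  have hab : a - b = (zp n - zm n) - (α n (zp n) - α n (zm n)) := by
    rw [ha_def, hb_def]; ring
  have hM2 : M ≤ d + e*d := by
    calc M = ‖(zp n - zm n) - (α n (zp n) - α n (zm n))‖ := by rw [hM_def, hab]
      _ ≤ ‖zp n - zm n‖ + ‖α n (zp n) - α n (zm n)‖ := norm_sub_le _ _
      _ ≤ d + e*d := by rw [← hd_def]; linarith
  have hM1 : d - e*d ≤ M := by
    have h := norm_sub_norm_le (zp n - zm n) (α n (zp n) - α n (zm n))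
    rw [← hab, ← hd_def, ← hM_def] at h
    linarith
  have hPM : P * M ≤ e*d*(2*A + e*d) := by
    have hfac : (a + b) * (a - b) = Bm * (Bp - Cp) + (Bm - Cm) * Cp := by
      have h1 : (a + b) * (a - b) = a^2 - b^2 := by ring
      rw [h1, ha_def, hb_def, hrootp n, hrootm n, ← hBm_def, ← hBp_def, ← hCm_def,
        ← hCp_def]
      ring
    have hCpA : ‖Cp‖ ≤ A + e*d := by
      have h' : ‖Cp‖ ≤ ‖Bp‖ + ‖Bp - Cp‖ := by
        simpa [norm_sub_rev] using norm_le_norm_add_norm_sub' Cp Bp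
      rw [hApBp]; linarith
    calc P * M = ‖(a + b) * (a - b)‖ := by rw [hP_def, hM_def, norm_mul]
      _ = ‖Bm * (Bp - Cp) + (Bm - Cm) * Cp‖ := by rw [hfac]
      _ ≤ ‖Bm * (Bp - Cp)‖ + ‖(Bm - Cm) * Cp‖ := norm_add_le _ _
      _ = ‖Bm‖ * ‖Bp - Cp‖ + ‖Bm - Cm‖ * ‖Cp‖ := by rw [norm_mul, norm_mul]
      _ ≤ A * (e*d) + (e*d) * (A + e*d) := by
          apply add_le_add
          · rw [← hApBm]
            exact mul_le_mul_of_nonneg_left hβpC (by rw [hA_def]; positivity)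
          · exact mul_le_mul hβmC hCpA (norm_nonneg _) (by positivity)
      _ = e*d*(2*A + e*d) := by ring
  have hMA1 : M ≤ 2*A + P := by
    have h1 : a - b = 2*a - (a + b) := by ring
    have h2 : ‖(2:ℂ)*a‖ = 2*A := by rw [norm_mul, hA_def]; norm_num
    calc M = ‖2*a - (a+b)‖ := by rw [hM_def, h1]
      _ ≤ ‖(2:ℂ)*a‖ + ‖a+b‖ := norm_sub_le _ _
      _ = 2*A + P := by rw [h2, hP_def]
  have hMA2 : 2*A ≤ M + P := by
    have h1 : (2:ℂ)*a = (a - b) + (a + b) := by ring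
    have h2 : ‖(2:ℂ)*a‖ = 2*A := by rw [norm_mul, hA_def]; norm_num
    calc 2*A = ‖(a - b) + (a + b)‖ := by rw [← h2, h1]
      _ ≤ M + P := norm_add_le _ _
  have hSpA : ‖Sp‖ ≤ A + e*(d/2) := by
    have h' : ‖Sp‖ ≤ ‖Bp‖ + ‖Bp - Sp‖ := by
      simpa [norm_sub_rev] using norm_le_norm_add_norm_sub' Sp Bp
    rw [hApBp]; linarith
  have hSpA' : A ≤ ‖Sp‖ + e*(d/2) := by
    have h' : ‖Bp‖ ≤ ‖Sp‖ + ‖Sp - Bp‖ := by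
      simpa [norm_sub_rev] using norm_le_norm_add_norm_sub' Bp Sp
    have h'' : ‖Sp - Bp‖ ≤ e * (d/2) := by rwa [norm_sub_rev] at hβpS
    rw [hApBp]; linarith
  have hSmA : ‖Sm‖ ≤ A + e*(d/2) := by
    have h' : ‖Sm‖ ≤ ‖Bm‖ + ‖Bm - Sm‖ := by
      simpa [norm_sub_rev] using norm_le_norm_add_norm_sub' Sm Bm
    rw [hApBm]; linarith
  have hSmA' : A ≤ ‖Sm‖ + e*(d/2) := by
    have h' : ‖Bm‖ ≤ ‖Sm‖ + ‖Sm - Bm‖ := by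
      simpa [norm_sub_rev] using norm_le_norm_add_norm_sub' Bm Sm
    have h'' : ‖Sm - Bm‖ ≤ e * (d/2) := by rwa [norm_sub_rev] at hβmS
    rw [hApBm]; linarith
  have hB1 : B ≤ 2*A + e*d := by rw [hB_def]; linarith
  have hB2 : 2*A ≤ B + e*d := by rw [hB_def]; linarith
  have := coreR_aux P M A d B e (norm_nonneg _) (norm_nonneg _)
    (by rw [hB_def]; positivity) hd he0 he1 hM1 hM2 hPM hMA1 hMA2 hB1 hB2
  constructor
  · calc (1 - 100 * e) * (‖Sm‖ + ‖Sp‖) = (1 - 100*e) * B := by rw [hB_def]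
      _ ≤ d := this.1
  · calc d ≤ (1 + 100*e) * B := this.2
      _ = (1 + 100 * e) * (‖Sm‖ + ‖Sp‖) := by rw [hB_def]
end

section
/- Under the assumptions of the basic-equation setup, if γ_n = |z_n^+ − z_n^-| ≠ 0 and β_n^-(z_n^+)·β_n^+(z_n^+) ≠ 0, then with t_n = |β_n^+(z_n^+)|/|β_n^-(z_n^+)| and a sequence η_n ↓ 0 (η_n = 7ε_n), γ_n ≥ (2√t_n/(1+t_n) − η_n)(|β_n^-(z_n^*)| + |β_n^+(z_n^*)|), where z_n^* = (z_n^+ + z_n^-)/2. -/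
/-!
Write `ζ(z) = z - α(z)`, so that `ζ(z±)² = β⁻(z±) β⁺(z±)` and
`2|ζ(z⁺)| = 2√(|β⁻(z⁺)| |β⁺(z⁺)|) = (2√t/(1+t)) (|β⁻(z⁺)| + |β⁺(z⁺)|)`. Since `α, β±` are
`ε`-Lipschitz on the segment, `|ζ⁺ - ζ⁻|` is `γ` up to a factor `1 ± ε`, while
`(ζ⁺ - ζ⁻)(ζ⁺ + ζ⁻) = ζ⁺² - ζ⁻²` is a difference of products of the `β±` of size `O(εγ)`.
Hence `ζ⁺ + ζ⁻` is small, and `2|ζ⁺| ≤ |ζ⁺ - ζ⁻| + |ζ⁺ + ζ⁻|` bounds the left side by `γ` up to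
`O(ε)` errors. Moving from `z⁺` to the midpoint changes `|β⁻| + |β⁺|` by at most `εγ`; once
`2√t/(1+t) > 7ε` (otherwise there is nothing to prove) all errors are absorbed by `7ε`.
-/

open Real

lemma two_mul_sqrt_div_one_add_le_one {t : ℝ} (ht : 0 ≤ t) : 2 * √t / (1 + t) ≤ 1 := by
  rw [div_le_one (by positivity)]
  nlinarith [sq_nonneg (√t - 1), sq_sqrt ht]

/-- Also true when `a = 0`, where both sides vanish because `b / 0 = 0`. -/
lemma two_mul_sqrt_div_one_add_mul_add {a b : ℝ} (ha : 0 ≤ a) (hb : 0 ≤ b) :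
    2 * √(b / a) / (1 + b / a) * (a + b) = 2 * √(a * b) := by
  rcases ha.eq_or_lt with rfl | ha
  · simp
  rw [show b / a = a * b / a ^ 2 by field_simp, sqrt_div' _ (sq_nonneg a), sqrt_sq ha.le]
  field_simp

lemma norm_eq_sqrt_of_sq_eq_mul {𝕜 : Type*} [NormedField 𝕜] {ζ p q : 𝕜} (h : ζ ^ 2 = p * q) :
    ‖ζ‖ = √(‖p‖ * ‖q‖) := by
  rw [← norm_mul, ← h, norm_pow, sqrt_sq (norm_nonneg ζ)]

lemma norm_sub_mul_norm_add_le_of_sq_eq_mul {𝕜 : Type*} [NormedField 𝕜]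
    {ζ₁ ζ₂ p₁ q₁ p₂ q₂ : 𝕜} {δ : ℝ} (h₁ : ζ₁ ^ 2 = p₁ * q₁) (h₂ : ζ₂ ^ 2 = p₂ * q₂)
    (hp : ‖p₁ - p₂‖ ≤ δ) (hq : ‖q₁ - q₂‖ ≤ δ) :
    ‖ζ₁ - ζ₂‖ * ‖ζ₁ + ζ₂‖ ≤ δ * (‖p₁‖ + ‖q₁‖ + δ) := by
  have hfactor : (ζ₁ - ζ₂) * (ζ₁ + ζ₂) = p₁ * (q₁ - q₂) + (p₁ - p₂) * q₂ := by
    linear_combination h₁ - h₂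
  have hq₂ : ‖q₂‖ ≤ ‖q₁‖ + δ := by
    linarith [norm_sub_norm_le q₂ q₁, norm_sub_rev q₁ q₂]
  calc ‖ζ₁ - ζ₂‖ * ‖ζ₁ + ζ₂‖ ≤ ‖p₁‖ * ‖q₁ - q₂‖ + ‖p₁ - p₂‖ * ‖q₂‖ := by
        rw [← norm_mul, ← norm_mul, ← norm_mul, hfactor]
        exact norm_add_le _ _
    _ ≤ ‖p₁‖ * δ + δ * (‖q₁‖ + δ) := by
        gcongr
        exact (norm_nonneg _).trans hp
    _ = δ * (‖p₁‖ + ‖q₁‖ + δ) := by ring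

lemma two_mul_norm_mul_one_sub_le {E : Type*} [NormedAddCommGroup E] [NormedSpace ℝ E]
    {ζ₁ ζ₂ : E} {γ ε S : ℝ} (hγ : 0 < γ) (hε : ε ≤ 1) (hdist : |‖ζ₁ - ζ₂‖ - γ| ≤ ε * γ)
    (hprod : ‖ζ₁ - ζ₂‖ * ‖ζ₁ + ζ₂‖ ≤ ε * γ * (S + ε * γ)) :
    2 * ‖ζ₁‖ * (1 - ε) ≤ γ + ε * S := by
  obtain ⟨hlow, hup⟩ := abs_le.1 hdist
  have hsum : ‖ζ₁ + ζ₂‖ * (1 - ε) ≤ ε * (S + ε * γ) := by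
    refine le_of_mul_le_mul_right ?_ hγ
    nlinarith [norm_nonneg (ζ₁ + ζ₂)]
  have htwo : 2 * ‖ζ₁‖ ≤ ‖ζ₁ - ζ₂‖ + ‖ζ₁ + ζ₂‖ := by
    have h : (2 : ℝ) • ζ₁ = (ζ₁ - ζ₂) + (ζ₁ + ζ₂) := by rw [two_smul]; abel
    simpa only [← h, norm_smul, Real.norm_two] using norm_add_le (ζ₁ - ζ₂) (ζ₁ + ζ₂)
  nlinarith

lemma two_mul_sqrt_mul_one_sub_le_of_sq_eq_mul {𝕜 : Type*} [NormedField 𝕜] [NormedSpace ℝ 𝕜]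
    {α βp βm : 𝕜 → 𝕜} {zp zm : 𝕜} {ε : ℝ} (hε : ε ≤ 1)
    (hrootp : (zp - α zp) ^ 2 = βm zp * βp zp) (hrootm : (zm - α zm) ^ 2 = βm zm * βp zm)
    (hα : ‖α zp - α zm‖ ≤ ε * ‖zp - zm‖) (hβp : ‖βp zp - βp zm‖ ≤ ε * ‖zp - zm‖)
    (hβm : ‖βm zp - βm zm‖ ≤ ε * ‖zp - zm‖) (hγ : zp ≠ zm) :
    2 * √(‖βm zp‖ * ‖βp zp‖) * (1 - ε) ≤ ‖zp - zm‖ + ε * (‖βm zp‖ + ‖βp zp‖) := by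
  have hdist : |‖(zp - α zp) - (zm - α zm)‖ - ‖zp - zm‖| ≤ ε * ‖zp - zm‖ := by
    refine (abs_norm_sub_norm_le _ _).trans ?_
    rwa [show zp - α zp - (zm - α zm) - (zp - zm) = -(α zp - α zm) by ring, norm_neg]
  rw [← norm_eq_sqrt_of_sq_eq_mul hrootp]
  exact two_mul_norm_mul_one_sub_le (norm_pos_iff.2 (sub_ne_zero.2 hγ)) hε hdist
    (norm_sub_mul_norm_add_le_of_sq_eq_mul hrootp hrootm hβm hβp)

lemma sub_mul_le_of_mul_one_sub_le {c ε S γ M : ℝ} (hε : 0 ≤ ε) (hc₁ : c ≤ 1)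
    (hc : 7 * ε < c) (hS : 0 ≤ S) (hkey : c * S * (1 - ε) ≤ γ + ε * S)
    (hM : M ≤ S + ε * γ) : (c - 7 * ε) * M ≤ γ := by
  set d := c - 7 * ε
  have hd : 0 ≤ d := by linarith
  have hγ : S * (c - 2 * ε) ≤ γ := by
    nlinarith [mul_nonneg (mul_nonneg hS hε) (sub_nonneg.2 hc₁)]
  have hdS : d * S ≤ γ * (1 - d * ε) := by
    have h₁ : 0 ≤ 1 - d * ε := by nlinarith
    have h₂ : 0 ≤ S * (c - 2 * ε) := mul_nonneg hS (by linarith)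
    nlinarith [mul_nonneg (sub_nonneg.2 hγ) h₁,
      mul_nonneg h₂ (mul_nonneg hε (by linarith : 0 ≤ 1 - d)),
      mul_nonneg (mul_nonneg hS hε) (by linarith : 0 ≤ 5 - c + 2 * ε)]
  nlinarith [mul_le_mul_of_nonneg_left hM hd]

theorem gap_lower_bound_general (α βp βm α' βp' βm' : ℂ → ℂ) (zp zm : ℂ) (ε : ℝ)
    (hε0 : 0 ≤ ε)
    (hrootp : (zp - α zp) ^ 2 = βm zp * βp zp)
    (hrootm : (zm - α zm) ^ 2 = βm zm * βp zm)
    (hderiv : ∀ z ∈ segment ℝ zm zp,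
      HasDerivAt α (α' z) z ∧ HasDerivAt βp (βp' z) z ∧ HasDerivAt βm (βm' z) z)
    (hbound : ∀ z ∈ segment ℝ zm zp, ‖α' z‖ ≤ ε ∧ ‖βp' z‖ ≤ ε ∧ ‖βm' z‖ ≤ ε)
    (hγ : zp ≠ zm) :
    (2 * Real.sqrt (‖βp zp‖ / ‖βm zp‖) / (1 + ‖βp zp‖ / ‖βm zp‖) - 7 * ε) *
        (‖βm ((zp + zm) / 2)‖ + ‖βp ((zp + zm) / 2)‖) ≤ ‖zp - zm‖ := by
  set c := 2 * √(‖βp zp‖ / ‖βm zp‖) / (1 + ‖βp zp‖ / ‖βm zp‖)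
  rcases le_or_gt c (7 * ε) with hc | hc
  · exact (mul_nonpos_of_nonpos_of_nonneg (sub_nonpos.2 hc) (by positivity)).trans
      (norm_nonneg _)
  have hc₁ : c ≤ 1 := two_mul_sqrt_div_one_add_le_one (by positivity)
  set s := segment ℝ zm zp
  have lip {f f' : ℂ → ℂ} (hf : ∀ z ∈ s, HasDerivAt f (f' z) z) (hf' : ∀ z ∈ s, ‖f' z‖ ≤ ε)
      : ∀ ⦃u v⦄, u ∈ s → v ∈ s → ‖f u - f v‖ ≤ ε * ‖u - v‖ := fun _ _ hu hv =>
    (convex_segment zm zp).norm_image_sub_le_of_norm_hasDerivWithin_le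
      (fun z hz => (hf z hz).hasDerivWithinAt) hf' hv hu
  have lipα := lip (fun z hz => (hderiv z hz).1) (fun z hz => (hbound z hz).1)
  have lipβp := lip (fun z hz => (hderiv z hz).2.1) (fun z hz => (hbound z hz).2.1)
  have lipβm := lip (fun z hz => (hderiv z hz).2.2) (fun z hz => (hbound z hz).2.2)
  have hp : zp ∈ s := right_mem_segment ℝ zm zp
  have hm : zm ∈ s := left_mem_segment ℝ zm zp
  have hkey := two_mul_sqrt_mul_one_sub_le_of_sq_eq_mul (by linarith) hrootp hrootm
    (lipα hp hm) (lipβp hp hm) (lipβm hp hm) hγ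
  rw [← two_mul_sqrt_div_one_add_mul_add (norm_nonneg _) (norm_nonneg _)] at hkey
  have hmid : (zp + zm) / 2 ∈ s := ⟨1 / 2, 1 / 2, by norm_num, by norm_num, by norm_num,
    by simp only [Complex.real_smul]; push_cast; ring⟩
  have hhalf : ‖(zp + zm) / 2 - zp‖ = ‖zp - zm‖ / 2 := by
    rw [show (zp + zm) / 2 - zp = -((zp - zm) / 2) by ring, norm_neg, norm_div, Complex.norm_two]
  have hβm := (norm_sub_norm_le _ _).trans ((lipβm hmid hp).trans_eq (by rw [hhalf]))
  have hβp := (norm_sub_norm_le _ _).trans ((lipβp hmid hp).trans_eq (by rw [hhalf]))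
  exact sub_mul_le_of_mul_one_sub_le hε0 hc₁ hc (by positivity) hkey (by linarith)

/-- Lemma 32.1 of the paper (lower bound for the gap): if `γ_n ≠ 0` and
`β_n^-(z_n^+)·β_n^+(z_n^+) ≠ 0`, then with `t_n = |β_n^+(z_n^+)|/|β_n^-(z_n^+)|` and
`η_n = 7 ε_n`, one has
`γ_n ≥ (2√t_n/(1+t_n) − η_n)(|β_n^-(z_n^*)| + |β_n^+(z_n^*)|)`, `z_n^* = (z_n^+ + z_n^-)/2`. -/
theorem gap_lower_bound (α βp βm α' βp' βm' : ℂ → ℂ) (zp zm : ℂ) (ε : ℝ)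
    (hε0 : 0 ≤ ε) (hε : ε < 1 / 2)
    (hrootp : (zp - α zp) ^ 2 = βm zp * βp zp)
    (hrootm : (zm - α zm) ^ 2 = βm zm * βp zm)
    (hderiv : ∀ z ∈ segment ℝ zm zp,
      HasDerivAt α (α' z) z ∧ HasDerivAt βp (βp' z) z ∧ HasDerivAt βm (βm' z) z)
    (hbound : ∀ z ∈ segment ℝ zm zp, ‖α' z‖ ≤ ε ∧ ‖βp' z‖ ≤ ε ∧ ‖βm' z‖ ≤ ε)
    (hγ : zp ≠ zm) (hBB : βm zp * βp zp ≠ 0) :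
    (2 * Real.sqrt (‖βp zp‖ / ‖βm zp‖) / (1 + ‖βp zp‖ / ‖βm zp‖) - 7 * ε) *
        (‖βm ((zp + zm) / 2)‖ + ‖βp ((zp + zm) / 2)‖) ≤ ‖zp - zm‖ :=
  gap_lower_bound_general α βp βm α' βp' βm' zp zm ε hε0 hrootp hrootm hderiv hbound hγ
end
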